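/- arXiv:0705.3486 — 9 statements merged into one kernel-verified Lean document; each statement's English description precedes it below -/
import Mathlib

section
/- Let B be a commutative Poisson algebra over a field k of characteristic zero, and let A = B[x^{±1}] be the Poisson Laurent polynomial algebra with bracket determined by {x,b} = α(b)x for a Poisson derivation α on B. Assume α extends to a derivation α̂ on A with α̂(x) = sx for some nonzero s ∈ k. Then every prime ideal P of A which is both a Poisson ideal and α̂-stable satisfies P = (P ∩ B)·A, i.e., P is induced from a Poisson prime of B. -/
/-- A Poisson bracket on a commutative `R`-algebra `A`: an `R`-bilinear
(antisymmetric) Lie bracket which is a derivation in each variable. -/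
def IsPoissonBracket (R : Type*) {A : Type*} [CommRing R] [CommRing A] [Algebra R A]
    (br : A → A → A) : Prop :=
  (∀ a b c : A, br (a + b) c = br a c + br b c) ∧
  (∀ a b c : A, br a (b + c) = br a b + br a c) ∧
  (∀ (r : R) (a b : A), br (r • a) b = r • br a b) ∧
  (∀ a b : A, br a b = - br b a) ∧
  (∀ a b c : A, br a (br b c) = br (br a b) c + br b (br a c)) ∧
  (∀ a b c : A, br a (b * c) = br a b * c + b * br a c)

open LaurentPolynomial in
/-- Lemma 1.2: every `α̂`-stable Poisson prime of the Poisson Laurent polynomial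
algebra `A = B[x^{±1}; α]_p` is induced from a Poisson prime of `B`. -/
theorem statement0 (k : Type*) [Field k] [CharZero k]
    (B : Type*) [CommRing B] [Algebra k B]
    (brB : B → B → B) (hbrB : IsPoissonBracket k brB)
    (α : Derivation k B B)
    (hα : ∀ a b : B, α (brB a b) = brB (α a) b + brB a (α b))
    (brA : LaurentPolynomial B → LaurentPolynomial B → LaurentPolynomial B)
    (hbrA : IsPoissonBracket k brA)
    (hext : ∀ a b : B, brA (C a) (C b) = C (brB a b))
    (hx : ∀ b : B, brA (T 1) (C b) = C (α b) * T 1)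
    (αhat : Derivation k (LaurentPolynomial B) (LaurentPolynomial B))
    (hαhatC : ∀ b : B, αhat (C b) = C (α b))
    (s : k) (hs : s ≠ 0) (hαhatT : αhat (T 1) = s • T 1)
    (P : Ideal (LaurentPolynomial B)) (hP : P.IsPrime)
    (hPpois : ∀ a b : LaurentPolynomial B, b ∈ P → brA a b ∈ P)
    (hPstab : ∀ a ∈ P, αhat a ∈ P) :
    P = Ideal.map (C : B →+* LaurentPolynomial B)
        (P.comap (C : B →+* LaurentPolynomial B)) := by
  classical
  obtain ⟨hadd_l, hadd_r, hsmul_l, hskew, hjac, hleib⟩ := hbrA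
  -- cancellation of doubling in a `k`-module
  have hhalf : ∀ x : LaurentPolynomial B, x + x = 0 → x = 0 := by
    intro x h
    have h2 : (2 : k) • x = 0 := by rw [two_smul]; exact h
    calc x = (2 : k)⁻¹ • ((2 : k) • x) := by
            rw [smul_smul, inv_mul_cancel₀ (two_ne_zero), one_smul]
      _ = 0 := by rw [h2, smul_zero]
  have hbr0 : ∀ a : LaurentPolynomial B, brA a 0 = 0 := by
    intro a
    have h := hadd_r a 0 0
    rw [add_zero] at h
    exact (add_eq_right.mp h.symm)
  have hbr1 : ∀ a : LaurentPolynomial B, brA a 1 = 0 := by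
    intro a
    have h := hleib a 1 1
    rw [mul_one, mul_one, one_mul] at h
    exact (add_eq_right.mp h.symm)
  have hT1T1 : brA (T 1) (T 1 : LaurentPolynomial B) = 0 := by
    apply hhalf
    have h := hskew (T 1 : LaurentPolynomial B) (T 1)
    nth_rewrite 1 [h]
    exact neg_add_cancel _
  have hT1Tm1 : brA (T 1) (T (-1) : LaurentPolynomial B) = 0 := by
    have h := hleib (T 1 : LaurentPolynomial B) (T 1) (T (-1))
    rw [← T_add, add_neg_cancel, T_zero, hbr1, hT1T1, zero_mul, zero_add] at h
    calc brA (T 1) (T (-1) : LaurentPolynomial B)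
        = (T (-1) * T 1) * brA (T 1) (T (-1)) := by
          rw [← T_add, neg_add_cancel, T_zero, one_mul]
      _ = T (-1) * (T 1 * brA (T 1) (T (-1))) := by rw [mul_assoc]
      _ = 0 := by rw [← h, mul_zero]
  have hbrT : ∀ n : ℤ, brA (T 1) (T n : LaurentPolynomial B) = 0 := by
    intro n
    induction n using Int.induction_on with
    | zero => rw [T_zero]; exact hbr1 _
    | succ i ih =>
        rw [T_add, hleib, ih, hT1T1, zero_mul, mul_zero, add_zero]
    | pred i ih =>
        have : ((-i : ℤ) - 1) = (-i) + (-1) := by ring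
        rw [this, T_add, hleib, ih, hT1Tm1, zero_mul, mul_zero, add_zero]
  -- bracket with a monomial
  have hmono_br : ∀ (b : B) (n : ℤ),
      brA (T 1) (C b * T n) = C (α b) * T (n + 1) := by
    intro b n
    rw [hleib, hx, hbrT, mul_zero, add_zero, mul_T_assoc, add_comm]
  -- αhat on T (-1)
  have hαTm1 : αhat (T (-1) : LaurentPolynomial B) = (-s) • T (-1) := by
    have h0 := αhat.leibniz (T 1 : LaurentPolynomial B) (T (-1))
    rw [← T_add, add_neg_cancel, T_zero, αhat.map_one_eq_zero, hαhatT, smul_eq_mul, smul_eq_mul] at h0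
    have h3 : (T (-1) : LaurentPolynomial B) * (s • T 1) = s • (1 : LaurentPolynomial B) := by
      rw [mul_smul_comm, ← T_add, neg_add_cancel, T_zero]
    rw [h3] at h0
    have h2 : T 1 * αhat (T (-1) : LaurentPolynomial B) = -(s • (1 : LaurentPolynomial B)) :=
      eq_neg_of_add_eq_zero_left h0.symm
    calc αhat (T (-1) : LaurentPolynomial B)
        = (T (-1) * T 1) * αhat (T (-1)) := by
          rw [← T_add, neg_add_cancel, T_zero, one_mul]
      _ = T (-1) * (T 1 * αhat (T (-1))) := by rw [mul_assoc]
      _ = T (-1) * (-(s • (1 : LaurentPolynomial B))) := by rw [h2]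
      _ = (-s) • T (-1) := by
          rw [mul_neg, mul_smul_comm, mul_one, neg_smul]
  have hαT : ∀ n : ℤ, αhat (T n : LaurentPolynomial B) = ((n : k) * s) • T n := by
    intro n
    induction n using Int.induction_on with
    | zero => simp
    | succ i ih =>
        have ht : (T ((i : ℤ) + 1) : LaurentPolynomial B) = T i * T 1 := T_add _ _
        rw [ht, αhat.leibniz, ih, hαhatT, smul_eq_mul, smul_eq_mul,
          mul_smul_comm, mul_smul_comm, T_mul, ← add_smul]
        congr 1
        push_cast
        ring
    | pred i ih =>
        have ht : (T ((-i : ℤ) - 1) : LaurentPolynomial B) = T (-i) * T (-1) := T_sub _ _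
        rw [ht, αhat.leibniz, ih, hαTm1, smul_eq_mul, smul_eq_mul,
          mul_smul_comm, mul_smul_comm, T_mul, ← add_smul]
        congr 1
        push_cast
        ring
  -- αhat on a monomial
  have hmono_α : ∀ (b : B) (n : ℤ),
      αhat (C b * T n) = C (α b) * T n + ((n : k) * s) • (C b * T n) := by
    intro b n
    rw [αhat.leibniz, hαhatC, hαT, smul_eq_mul, smul_eq_mul, mul_smul_comm,
      mul_comm (T n) (C (α b))]
    exact add_comm _ _
  -- the "Euler" operator
  set D : LaurentPolynomial B → LaurentPolynomial B :=
    fun p => s⁻¹ • (αhat p - brA (T 1) p * T (-1)) with hDdef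
  have hD_mem : ∀ p ∈ P, D p ∈ P := by
    intro p hp
    rw [hDdef]
    simp only []
    rw [Algebra.smul_def]
    exact P.mul_mem_left _ (P.sub_mem (hPstab p hp)
      (P.mul_mem_right _ (hPpois _ _ hp)))
  have hD_single : ∀ (b : B) (n : ℤ), D (C b * T n) = (n : k) • (C b * T n) := by
    intro b n
    rw [hDdef]
    simp only []
    rw [hmono_α, hmono_br, mul_T_assoc]
    have h1 : (n + 1 + -1 : ℤ) = n := by ring
    have h2 : s⁻¹ * ((n : k) * s) = (n : k) := by
      rw [mul_comm (n : k) s, ← mul_assoc, inv_mul_cancel₀ hs, one_mul]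
    rw [h1, add_sub_cancel_left, smul_smul, h2]
  have hD_zero : D 0 = 0 := by
    rw [hDdef]; simp only []
    rw [map_zero, hbr0, zero_mul, sub_zero, smul_zero]
  have hD_add : ∀ p q : LaurentPolynomial B, D (p + q) = D p + D q := by
    intro p q
    rw [hDdef]; simp only []
    rw [map_add, hadd_r, add_mul, ← smul_add]
    congr 1
    ring
  -- D as an additive monoid hom, to push through sums
  set Dh : LaurentPolynomial B →+ LaurentPolynomial B :=
    { toFun := D, map_zero' := hD_zero, map_add' := hD_add } with hDh
  have hrep : ∀ p : LaurentPolynomial B, p = ∑ n ∈ p.coeff.support, C (p.coeff n) * T n := by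
    intro p
    conv_lhs => rw [← AddMonoidAlgebra.sum_coeff_single p]
    rw [Finsupp.sum]
    simp [single_eq_C_mul_T]
  have hDcoeff : ∀ (p : LaurentPolynomial B) (m : ℤ), (D p).coeff m = (m : k) • p.coeff m := by
    intro p m
    have h : D p = ∑ n ∈ p.coeff.support, AddMonoidAlgebra.single n ((n : k) • p.coeff n) := by
      conv_lhs => rw [hrep p]
      show Dh _ = _
      rw [map_sum]
      apply Finset.sum_congr rfl
      intro n _
      show D _ = _
      rw [hD_single, ← single_eq_C_mul_T, AddMonoidAlgebra.smul_single]
    rw [h, AddMonoidAlgebra.coeff_sum, Finset.sum_apply']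
    rw [Finset.sum_eq_single m (fun n _ hnm => by rw [AddMonoidAlgebra.coeff_single, Finsupp.single_apply, if_neg hnm])
      (fun hm => by simp [AddMonoidAlgebra.coeff_single, Finsupp.single_apply, Finsupp.notMem_support_iff.mp hm])]
    rw [AddMonoidAlgebra.coeff_single, Finsupp.single_apply, if_pos rfl]
  set I : Ideal B := P.comap (C : B →+* LaurentPolynomial B) with hI
  have hsmulI : ∀ (c : k) (b : B), b ∈ I → c • b ∈ I := by
    intro c b hb
    rw [Algebra.smul_def]
    exact I.mul_mem_left _ hb
  have hsmulP : ∀ (c : k) (p : LaurentPolynomial B), p ∈ P → c • p ∈ P := by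
    intro c p hp
    rw [Algebra.smul_def]
    exact P.mul_mem_left _ hp
  -- the key claim
  have key : ∀ N : ℕ, ∀ p : LaurentPolynomial B, p ∈ P → p.coeff.support.card ≤ N →
      ∀ m : ℤ, p.coeff m ∈ I := by
    intro N
    induction N with
    | zero =>
        intro p hp hcard m
        have : p.coeff.support = ∅ := Finset.card_eq_zero.mp (Nat.le_zero.mp hcard)
        have hp0 : p = 0 := AddMonoidAlgebra.coeff_eq_zero.mp (Finsupp.support_eq_empty.mp this)
        rw [hp0]
        exact I.zero_mem
    | succ N IH =>
        intro p hp hcard m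
        by_cases h0 : p.coeff.support = ∅
        · have hp0 : p = 0 := AddMonoidAlgebra.coeff_eq_zero.mp (Finsupp.support_eq_empty.mp h0)
          rw [hp0]; exact I.zero_mem
        obtain ⟨n, hn⟩ := Finset.nonempty_iff_ne_empty.mpr h0
        set q : LaurentPolynomial B := D p - (n : k) • p with hqdef
        have hqP : q ∈ P := P.sub_mem (hD_mem p hp) (hsmulP _ _ hp)
        have hqcoeff : ∀ m' : ℤ, q.coeff m' = ((m' : k) - (n : k)) • p.coeff m' := by
          intro m'
          rw [hqdef, AddMonoidAlgebra.coeff_sub, Finsupp.sub_apply, hDcoeff, AddMonoidAlgebra.coeff_smul, Finsupp.smul_apply, sub_smul]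
        have hqsupp : q.coeff.support ⊆ p.coeff.support.erase n := by
          intro m' hm'
          rw [Finsupp.mem_support_iff] at hm'
          rw [hqcoeff] at hm'
          rw [Finset.mem_erase, Finsupp.mem_support_iff]
          constructor
          · rintro rfl
            exact hm' (by rw [sub_self, zero_smul])
          · intro hpm'
            exact hm' (by rw [hpm', smul_zero])
        have hqcard : q.coeff.support.card ≤ N := by
          have h1 := Finset.card_le_card hqsupp
          have h2 := Finset.card_erase_of_mem hn
          omega
        have hIq := IH q hqP hqcard
        have hIp' : ∀ m' : ℤ, m' ≠ n → p.coeff m' ∈ I := by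
          intro m' hm'
          have hc : ((m' : k) - (n : k)) ≠ 0 := by
            rw [sub_ne_zero]
            exact_mod_cast hm'
          have h := hIq m'
          rw [hqcoeff] at h
          have : p.coeff m' = ((m' : k) - (n : k))⁻¹ • (((m' : k) - (n : k)) • p.coeff m') := by
            rw [smul_smul, inv_mul_cancel₀ hc, one_smul]
          rw [this]
          exact hsmulI _ _ h
        by_cases hmn : m = n
        · subst hmn
          have hmonoP : C (p.coeff m) * T m ∈ P := by
            have hrest : ∑ m' ∈ p.coeff.support.erase m, C (p.coeff m') * T m' ∈ P := by
              apply Ideal.sum_mem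
              intro m' hm'
              apply P.mul_mem_right
              exact hIp' m' (Finset.ne_of_mem_erase hm')
            have hsplit : p = C (p.coeff m) * T m + ∑ m' ∈ p.coeff.support.erase m, C (p.coeff m') * T m' := by
              conv_lhs => rw [hrep p]
              exact (Finset.add_sum_erase _ _ hn).symm
            have hsum : C (p.coeff m) * T m
                = p - ∑ m' ∈ p.coeff.support.erase m, C (p.coeff m') * T m' := by
              exact eq_sub_of_add_eq hsplit.symm
            rw [hsum]
            exact P.sub_mem hp hrest
          have hCp : (C (p.coeff m) : LaurentPolynomial B) ∈ P := by
            have : (C (p.coeff m) : LaurentPolynomial B) = C (p.coeff m) * T m * T (-m) := by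
              rw [mul_T_assoc, add_neg_cancel, T_zero, mul_one]
            rw [this]
            exact P.mul_mem_right _ hmonoP
          exact hCp
        · exact hIp' m hmn
  apply le_antisymm
  · intro p hp
    have hcoeff := key p.coeff.support.card p hp le_rfl
    rw [hrep p]
    apply Ideal.sum_mem
    intro n _
    apply Ideal.mul_mem_right
    exact Ideal.mem_map_of_mem _ (hcoeff n)
  · rw [Ideal.map_le_iff_le_comap]
end

section
/- Let B be a Poisson algebra over a field k of characteristic zero, and let A = B[x; α, δ]_p be a Poisson polynomial algebra in which B is a field. If A possesses a nonzero α̂-stable Poisson prime ideal P (where α̂ extends α with α̂(x) = sx, s ≠ 0), then there exists d ∈ B with α(d) = sd and {d,b} = α(b)d − δ(b) for all b ∈ B; consequently, setting y = x + d, one has A = B[y; α]_p and the only α̂-stable Poisson primes of A are ⟨0⟩ and ⟨y⟩. -/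
open Polynomial

section PAux
set_option linter.unusedSectionVars false
variable {B : Type*} [CommRing B] [Nontrivial B]

noncomputable def cmap (g : B → B) (f : B[X]) : B[X] := f.sum fun n a => C (g a) * X ^ n

lemma cmap_coeff (g : B → B) (hg0 : g 0 = 0) (f : B[X]) (j : ℕ) :
    (cmap g f).coeff j = g (f.coeff j) := by
  rw [cmap, Polynomial.sum, finset_sum_coeff]
  simp only [coeff_C_mul, coeff_X_pow, mul_ite, mul_one, mul_zero]
  simp only [eq_comm (a := j)]
  rw [Finset.sum_ite_eq' f.support j (fun n => g (f.coeff n))]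
  by_cases h : j ∈ f.support
  · simp [h]
  · simp [h, Polynomial.notMem_support_iff.mp h, hg0]

lemma cmap_add (g : B → B) (hg0 : g 0 = 0) (hga : ∀ a b, g (a + b) = g a + g b)
    (p q : B[X]) : cmap g (p + q) = cmap g p + cmap g q := by
  ext j
  simp [cmap_coeff g hg0, hga]

lemma cmap_monomial (g : B → B) (hg0 : g 0 = 0) (a : B) (n : ℕ) :
    cmap g (C a * X ^ n) = C (g a) * X ^ n := by
  ext j
  rw [cmap_coeff g hg0]
  simp only [coeff_C_mul, coeff_X_pow, mul_ite, mul_one, mul_zero]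
  split <;> simp [hg0]

lemma keyD (D : B[X] → B[X]) (g : B → B)
    (hadd : ∀ p q, D (p + q) = D p + D q)
    (hmul : ∀ p q, D (p * q) = D p * q + p * D q)
    (hC : ∀ a, D (C a) = C (g a)) (f : B[X]) :
    D f = cmap g f + derivative f * D X := by
  have hD0 : D 0 = 0 := by
    have h := hadd 0 0
    rw [add_zero] at h
    exact (left_eq_add.mp h)
  have hg0 : g 0 = 0 := by
    have : C (g 0) = 0 := by rw [← hC 0, map_zero, hD0]
    exact C_eq_zero.mp this
  have hga : ∀ a b, g (a + b) = g a + g b := by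
    intro a b
    have : C (g (a + b)) = C (g a + g b) := by
      rw [map_add, ← hC, ← hC, ← hC, ← hadd, ← map_add]
    exact C_injective this
  have hD1 : D 1 = 0 := by
    have h := hmul 1 1
    simp only [one_mul, mul_one] at h
    exact (left_eq_add.mp h)
  have hXpow : ∀ n : ℕ, D (X ^ n) = derivative (X ^ n : B[X]) * D X := by
    intro n
    induction n with
    | zero => simpa using hD1
    | succ n ih =>
      rw [pow_succ, hmul, ih, derivative_mul, derivative_X]
      ring
  induction f using Polynomial.induction_on' with
  | add p q hp hq =>
    rw [hadd, hp, hq, cmap_add g hg0 hga, derivative_add]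
    ring
  | monomial n a =>
    rw [← C_mul_X_pow_eq_monomial, hmul, hC, hXpow n, cmap_monomial g hg0,
      derivative_mul, derivative_C]
    ring

lemma mulX_coeff (f : B[X]) (j : ℕ) : (derivative f * X).coeff j = f.coeff j * (j : B) := by
  cases j with
  | zero => simp [Polynomial.mul_coeff_zero]
  | succ j => rw [coeff_mul_X, coeff_derivative]; push_cast; ring

lemma derCX (a : B) (n : ℕ) :
    derivative (C a * X ^ n) * X = C a * (C (n : B) * X ^ n) := by
  cases n with
  | zero => simp
  | succ n =>
    rw [derivative_mul, derivative_C, derivative_X_pow]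
    simp only [Nat.add_sub_cancel]
    rw [pow_succ]
    push_cast
    ring

end PAux

open Polynomial in
/-- The key step of Proposition 1.3: if `B` is a Poisson field and the Poisson
polynomial algebra `A = B[x; α, δ]_p` has a nonzero `α̂`-stable Poisson prime,
then there is `d ∈ B` with `α(d) = s d` and `{d,b} = α(b)d − δ(b)`; with
`y = x + d` one has `A = B[y; α]_p` and the only `α̂`-stable Poisson primes of
`A` are `⟨0⟩` and `⟨y⟩`. -/
theorem statement2 (k : Type*) [Field k] [CharZero k]
    (B : Type*) [Field B] [Algebra k B]
    (brB : B → B → B) (hbrB : IsPoissonBracket k brB)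
    (α : Derivation k B B)
    (hα : ∀ a b : B, α (brB a b) = brB (α a) b + brB a (α b))
    (δ : Derivation k B B)
    (hδ : ∀ a b : B, δ (brB a b)
      = brB (δ a) b + brB a (δ b) + α a * δ b - δ a * α b)
    (brA : B[X] → B[X] → B[X]) (hbrA : IsPoissonBracket k brA)
    (hext : ∀ a b : B, brA (C a) (C b) = C (brB a b))
    (hx : ∀ b : B, brA X (C b) = C (α b) * X + C (δ b))
    (αhat : Derivation k B[X] B[X])
    (hαhatC : ∀ b : B, αhat (C b) = C (α b))
    (s : k) (hs : s ≠ 0) (hαhatX : αhat X = s • X)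
    (hex : ∃ P : Ideal B[X], P ≠ ⊥ ∧ P.IsPrime ∧
      (∀ a b : B[X], b ∈ P → brA a b ∈ P) ∧ (∀ a ∈ P, αhat a ∈ P)) :
    ∃ d : B, α d = s • d ∧ (∀ b : B, brB d b = α b * d - δ b) ∧
      (∀ b : B, brA (X + C d) (C b) = C (α b) * (X + C d)) ∧
      ∀ P : Ideal B[X], P.IsPrime → (∀ a b : B[X], b ∈ P → brA a b ∈ P) →
        (∀ a ∈ P, αhat a ∈ P) → P = ⊥ ∨ P = Ideal.span {X + C d} := by
  classical
  obtain ⟨brAaddl, brAaddr, brAsmul, brAanti, brAjac, brAleib⟩ := hbrA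
  obtain ⟨brBaddl, brBaddr, brBsmul, brBanti, brBjac, brBleib⟩ := hbrB
  haveI : CharZero B := charZero_of_injective_algebraMap (algebraMap k B).injective
  set σ : B := algebraMap k B s with hσdef
  have hσ0 : σ ≠ 0 := by
    rw [hσdef]
    exact (_root_.map_ne_zero _).mpr hs
  have hsmulC : ∀ u : B[X], s • u = C σ * u := by
    intro u
    rw [Algebra.smul_def, Polynomial.algebraMap_apply]
  -- basic bracket facts
  have brB0 : ∀ a : B, brB a 0 = 0 := by
    intro a
    have h := brBaddr a 0 0
    rw [add_zero] at h
    exact left_eq_add.mp h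
  have brB1 : ∀ a : B, brB a 1 = 0 := by
    intro a
    have h := brBleib a 1 1
    simp only [one_mul, mul_one] at h
    exact left_eq_add.mp h
  have brBsmulr : ∀ (r : k) (a b : B), brB a (r • b) = r • brB a b := by
    intro r a b
    rw [brBanti, brBsmul, brBanti a b]
    simp
  have brA1 : ∀ a : B[X], brA a 1 = 0 := by
    intro a
    have h := brAleib a 1 1
    simp only [one_mul, mul_one] at h
    exact left_eq_add.mp h
  have brAself : ∀ a : B[X], brA a a = 0 := by
    intro a
    have h := brAanti a a
    have h2 : (2 : B[X]) * brA a a = 0 := by linear_combination h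
    rcases mul_eq_zero.mp h2 with h3 | h3
    · exact absurd h3 two_ne_zero
    · exact h3
  -- coefficient formula for αhat
  have hαhatf : ∀ f : B[X], αhat f = cmap (⇑α) f + derivative f * (C σ * X) := by
    intro f
    have h := keyD (fun g => αhat g) (⇑α) (fun p q => map_add _ p q)
      (fun p q => by simp only [Derivation.leibniz, smul_eq_mul]; ring) hαhatC f
    rw [h, hαhatX, hsmulC]
  have hαhatcoeff : ∀ (f : B[X]) (j : ℕ),
      (αhat f).coeff j = α (f.coeff j) + σ * (f.coeff j * (j : B)) := by
    intro f j
    rw [hαhatf, coeff_add, cmap_coeff (⇑α) (map_zero α), mul_comm (derivative f) (C σ * X),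
      mul_assoc, coeff_C_mul, mul_comm X (derivative f), mulX_coeff]
  have hαhatdeg : ∀ f : B[X], (αhat f).natDegree ≤ f.natDegree := by
    intro f
    rw [natDegree_le_iff_coeff_eq_zero]
    intro N hN
    rw [hαhatcoeff, coeff_eq_zero_of_natDegree_lt hN]
    simp
  -- coefficient formula for brA (C b) f
  have hbrCbf : ∀ (b : B) (f : B[X]),
      brA (C b) f = cmap (brB b) f - C (α b) * (derivative f * X) - C (δ b) * derivative f := by
    intro b f
    have h := keyD (fun g => brA (C b) g) (brB b) (brAaddr (C b)) (brAleib (C b))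
      (fun a => hext b a) f
    have hX : brA (C b) X = -(C (α b) * X + C (δ b)) := by rw [brAanti, hx]
    rw [h, hX]
    ring
  have hbrCbcoeff : ∀ (b : B) (f : B[X]) (j : ℕ),
      (brA (C b) f).coeff j = brB b (f.coeff j) - α b * (f.coeff j * (j : B))
        - δ b * (f.coeff (j + 1) * ((j : B) + 1)) := by
    intro b f j
    rw [hbrCbf, coeff_sub, coeff_sub, cmap_coeff (brB b) (brB0 b), coeff_C_mul, coeff_C_mul,
      mulX_coeff, coeff_derivative]
  -- cofactor lemma
  have cofactor : ∀ (q g : B[X]), q.Monic → g ∈ Ideal.span {q} → g.natDegree ≤ q.natDegree →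
      ∃ e : B, g = C e * q := by
    intro q g hq hmem hdeg
    obtain ⟨h, hg⟩ := Ideal.mem_span_singleton.mp hmem
    by_cases h0 : h = 0
    · exact ⟨0, by simp [hg, h0]⟩
    · have hdeg2 : g.natDegree = q.natDegree + h.natDegree := by
        rw [hg, natDegree_mul hq.ne_zero h0]
      have : h.natDegree = 0 := by omega
      obtain ⟨e, he⟩ := natDegree_eq_zero.mp this
      exact ⟨e, by rw [hg, ← he]; ring⟩
  -- monic generator of a nonzero prime
  have gen : ∀ P : Ideal B[X], P.IsPrime → P ≠ ⊥ →
      ∃ q : B[X], q.Monic ∧ P = Ideal.span {q} ∧ 1 ≤ q.natDegree := by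
    intro P hP hP0
    obtain ⟨q₀, hq₀⟩ := (IsPrincipalIdealRing.principal P)
    have hq₀0 : q₀ ≠ 0 := by
      rintro rfl
      exact hP0 (by simp [hq₀, Ideal.span_zero])
    refine ⟨q₀ * C q₀.leadingCoeff⁻¹, monic_mul_leadingCoeff_inv hq₀0, ?_, ?_⟩
    · rw [hq₀]
      show Ideal.span {q₀} = _
      rw [Ideal.span_singleton_eq_span_singleton]
      exact associated_mul_unit_right q₀ _ (isUnit_C.mpr (isUnit_iff_ne_zero.mpr
        (inv_ne_zero (leadingCoeff_ne_zero.mpr hq₀0))))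
    · by_contra hcon
      have h0 : (q₀ * C q₀.leadingCoeff⁻¹).natDegree = 0 := by omega
      have h1 : q₀ * C q₀.leadingCoeff⁻¹ = 1 :=
        ((monic_mul_leadingCoeff_inv hq₀0).natDegree_eq_zero).mp h0
      have : P = ⊤ := by
        rw [hq₀]
        show Ideal.span {q₀} = ⊤
        exact Ideal.span_singleton_eq_top.mpr (IsUnit.of_mul_eq_one _ h1)
      exact hP.ne_top this
  -- Part 1: extract d from the given stable prime
  obtain ⟨P, hP0, hPprime, hPpois, hPstab⟩ := hex
  obtain ⟨q, hqm, hPspan, hm1⟩ := gen P hPprime hP0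
  set m := q.natDegree with hmdef
  obtain ⟨j, hj⟩ : ∃ j, m = j + 1 := ⟨m - 1, by omega⟩
  have hjm : (m : B) = (j : B) + 1 := by rw [hj]; push_cast; try ring
  -- αhat relations on q
  have hαq_mem : αhat q ∈ Ideal.span {q} := hPspan ▸ hPstab q (hPspan ▸ Ideal.mem_span_singleton_self q)
  obtain ⟨e, he⟩ := cofactor q (αhat q) hqm hαq_mem (hαhatdeg q)
  have hecoeff : ∀ i : ℕ, α (q.coeff i) + σ * (q.coeff i * (i : B)) = e * q.coeff i := by
    intro i
    have := congrArg (fun u => Polynomial.coeff u i) he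
    simpa [hαhatcoeff] using this
  have heval : e = σ * (m : B) := by
    have h := hecoeff m
    rw [hqm.coeff_natDegree] at h
    simp only [Derivation.map_one_eq_zero, one_mul, mul_one, zero_add] at h
    exact h.symm
  have hrel1 : ∀ i : ℕ, α (q.coeff i) = σ * ((m : B) - (i : B)) * q.coeff i := by
    intro i
    have h := hecoeff i
    rw [heval] at h
    linear_combination h
  -- Poisson relations on q
  have hbr_mem : ∀ b : B, brA (C b) q ∈ Ideal.span {q} :=
    fun b => hPspan ▸ hPpois (C b) q (hPspan ▸ Ideal.mem_span_singleton_self q)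
  have hbrdeg : ∀ b : B, (brA (C b) q).natDegree ≤ m := by
    intro b
    rw [natDegree_le_iff_coeff_eq_zero]
    intro N hN
    rw [hbrCbcoeff, coeff_eq_zero_of_natDegree_lt hN,
      coeff_eq_zero_of_natDegree_lt (by omega : q.natDegree < N + 1)]
    simp [brB0]
  have hbrw : ∀ b : B, brB b (q.coeff j) = -(α b) * q.coeff j + δ b * ((j : B) + 1) := by
    intro b
    obtain ⟨w, hw⟩ := cofactor q (brA (C b) q) hqm (hbr_mem b) (hbrdeg b)
    have hwcoeff : ∀ i : ℕ, brB b (q.coeff i) - α b * (q.coeff i * (i : B))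
        - δ b * (q.coeff (i + 1) * ((i : B) + 1)) = w * q.coeff i := by
      intro i
      have := congrArg (fun u => Polynomial.coeff u i) hw
      simpa [hbrCbcoeff] using this
    have hwval : w = -(α b) * (m : B) := by
      have h := hwcoeff m
      rw [hqm.coeff_natDegree, coeff_eq_zero_of_natDegree_lt (by omega : q.natDegree < m + 1)] at h
      rw [brB1] at h
      linear_combination -h
    have h := hwcoeff j
    rw [hwval, ← hj, hqm.coeff_natDegree, hjm] at h
    linear_combination h
  -- define d
  set ν : k := ((j + 1 : ℕ) : k) with hνdef
  have hν0 : ν ≠ 0 := Nat.cast_ne_zero.mpr (by omega)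
  have hνB : algebraMap k B ν = ((j : B) + 1) := by
    rw [hνdef, map_natCast]
    push_cast
    try ring
  set d : B := ν⁻¹ • q.coeff j with hddef
  have hνinv : algebraMap k B ν⁻¹ = ((j : B) + 1)⁻¹ := by
    rw [map_inv₀, hνB]
  have hj1ne : ((j : B) + 1) ≠ 0 := by
    have h := Nat.cast_ne_zero (R := B).mpr (show j + 1 ≠ 0 by omega)
    push_cast at h
    exact h
  -- α d = s • d
  have hαd : α d = s • d := by
    have hαcj : α (q.coeff j) = σ * q.coeff j := by
      have h := hrel1 j
      rw [hjm] at h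
      rw [h]
      ring
    rw [hddef, α.map_smul, hαcj, Algebra.smul_def, Algebra.smul_def, Algebra.smul_def]
    ring
  -- brB d b = α b * d - δ b
  have hdb : ∀ b : B, brB d b = α b * d - δ b := by
    intro b
    have h1 : brB d b = ν⁻¹ • brB (q.coeff j) b := by rw [hddef, brBsmul]
    have h2 : brB (q.coeff j) b = α b * q.coeff j - δ b * ((j : B) + 1) := by
      rw [brBanti, hbrw b]
      ring
    rw [h1, h2, smul_sub, Algebra.smul_def, Algebra.smul_def, hνinv, hddef, Algebra.smul_def, hνinv]
    field_simp
  -- part 3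
  have h3 : ∀ b : B, brA (X + C d) (C b) = C (α b) * (X + C d) := by
    intro b
    rw [brAaddl, hx, hext, hdb b, map_sub, map_mul]
    ring
  refine ⟨d, hαd, hdb, h3, ?_⟩
  -- Part 4
  intro P' hP' hPois' hstab'
  by_cases hbot : P' = ⊥
  · exact Or.inl hbot
  right
  obtain ⟨q', hqm', hPspan', hm1'⟩ := gen P' hP' hbot
  set y : B[X] := X + C d with hydef
  set z : B[X] := X - C d with hzdef
  have hyz : ∀ u : B[X], (u.comp y).comp z = u := by
    intro u
    rw [comp_assoc]
    simp [hydef, hzdef]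
  have hzy : ∀ u : B[X], (u.comp z).comp y = u := by
    intro u
    rw [comp_assoc]
    simp [hydef, hzdef]
  have hcomp_inj : ∀ u v : B[X], u.comp y = v.comp y → u = v := by
    intro u v h
    rw [← hyz u, h, hyz]
  set r : B[X] := q'.comp z with hrdef
  have hq'r : q' = r.comp y := (hzy q').symm
  set n := q'.natDegree with hndef
  have hndz : z.natDegree = 1 := natDegree_X_sub_C d
  have hndy : y.natDegree = 1 := natDegree_X_add_C d
  have hrdeg : r.natDegree = n := by
    rw [hrdef, natDegree_comp, hndz, mul_one]
  have hrmonic : r.Monic := by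
    have h := leadingCoeff_comp (p := q') (q := z) (by rw [hndz]; omega)
    rw [leadingCoeff_X_sub_C, one_pow, mul_one] at h
    unfold Polynomial.Monic
    rw [← hrdef] at h
    rw [h, hqm'.leadingCoeff]
  -- bracket/derivation facts about y
  have hαd' : α d = σ * d := by rw [hαd, Algebra.smul_def]
  have hαy : αhat y = C σ * y := by
    rw [hydef, map_add, hαhatX, hαhatC, hαd', hsmulC, map_mul]
    ring
  have hypow : ∀ nn : ℕ, brA y (y ^ nn) = 0 := by
    intro nn
    induction nn with
    | zero => simpa using brA1 y
    | succ nn ih =>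
      rw [pow_succ, brAleib, ih, brAself]
      ring
  have hbrAy : ∀ u : B[X], brA y (u.comp y) = (cmap (⇑α) u).comp y * y := by
    intro u
    induction u using Polynomial.induction_on' with
    | add p q hp hq =>
      rw [add_comp, brAaddr, hp, hq, cmap_add (⇑α) (map_zero α) (map_add α), add_comp]
      ring
    | monomial nn a =>
      rw [← C_mul_X_pow_eq_monomial, mul_comp, C_comp, pow_comp, X_comp,
        brAleib, h3, hypow, cmap_monomial (⇑α) (map_zero α), mul_comp, C_comp, pow_comp, X_comp]
      ring
  have hαpow : ∀ nn : ℕ, αhat (y ^ nn) = C σ * (C (nn : B) * y ^ nn) := by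
    intro nn
    induction nn with
    | zero => simp [Derivation.map_one_eq_zero]
    | succ nn ih =>
      rw [pow_succ, Derivation.leibniz, smul_eq_mul, smul_eq_mul, ih, hαy]
      simp only [Nat.cast_succ, C_add, C_1]
      ring
  have hαhaty : ∀ u : B[X],
      αhat (u.comp y) = (cmap (⇑α) u).comp y + C σ * ((derivative u * X).comp y) := by
    intro u
    induction u using Polynomial.induction_on' with
    | add p q hp hq =>
      rw [add_comp, map_add, hp, hq, cmap_add (⇑α) (map_zero α) (map_add α), add_comp,
        derivative_add, add_mul, add_comp]
      ring
    | monomial nn a =>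
      rw [← C_mul_X_pow_eq_monomial, mul_comp, C_comp, pow_comp, X_comp,
        Derivation.leibniz, smul_eq_mul, smul_eq_mul, hαpow, hαhatC,
        cmap_monomial (⇑α) (map_zero α), derCX]
      simp only [mul_comp, C_comp, pow_comp, X_comp]
      ring
  -- extraction via αhat
  have hαq'_mem : αhat q' ∈ Ideal.span {q'} :=
    hPspan' ▸ hstab' q' (hPspan' ▸ Ideal.mem_span_singleton_self q')
  obtain ⟨e', he'⟩ := cofactor q' (αhat q') hqm' hαq'_mem (hαhatdeg q')
  have hkey1 : cmap (⇑α) r + C σ * (derivative r * X) = C e' * r := by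
    apply hcomp_inj
    have h2 := hαhaty r
    simp only [mul_comp, X_comp] at h2
    simp only [add_comp, mul_comp, C_comp, X_comp]
    rw [← h2, ← hq'r, he', hq'r]
  have hrcoeff : ∀ i : ℕ, α (r.coeff i) + σ * (r.coeff i * (i : B)) = e' * r.coeff i := by
    intro i
    have h := congrArg (fun u => Polynomial.coeff u i) hkey1
    simpa [cmap_coeff (⇑α) (map_zero α), mulX_coeff] using h
  have he'val : e' = σ * (n : B) := by
    have h := hrcoeff n
    rw [← hrdeg] at h
    rw [hrmonic.coeff_natDegree] at h
    simp only [Derivation.map_one_eq_zero, one_mul, mul_one, zero_add] at h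
    rw [← h, hrdeg]
  have hrel2 : ∀ i : ℕ, α (r.coeff i) = σ * ((n : B) - (i : B)) * r.coeff i := by
    intro i
    have h := hrcoeff i
    rw [he'val] at h
    linear_combination h
  -- extraction via brA y
  have hbry_mem : brA y q' ∈ Ideal.span {q'} :=
    hPspan' ▸ hPois' y q' (hPspan' ▸ Ideal.mem_span_singleton_self q')
  have hbry_eq : brA y q' = (cmap (⇑α) r).comp y * y := by
    rw [hq'r, hbrAy]
  have hcmapdeg : (cmap (⇑α) r).natDegree ≤ n - 1 := by
    rw [natDegree_le_iff_coeff_eq_zero]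
    intro N hN
    rw [cmap_coeff (⇑α) (map_zero α)]
    rcases lt_or_ge n N with hc | hc
    · rw [coeff_eq_zero_of_natDegree_lt (by omega : r.natDegree < N)]
      simp
    · have hNn : N = n := by omega
      have : r.coeff N = 1 := by rw [hNn, ← hrdeg]; exact hrmonic.coeff_natDegree
      rw [this]
      exact Derivation.map_one_eq_zero α
  have hbrydeg : (brA y q').natDegree ≤ n := by
    rw [hbry_eq]
    calc ((cmap (⇑α) r).comp y * y).natDegree
        ≤ ((cmap (⇑α) r).comp y).natDegree + y.natDegree := natDegree_mul_le
      _ ≤ (n - 1) + 1 := by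
          rw [natDegree_comp, hndy, mul_one]
          omega
      _ ≤ n := by omega
  obtain ⟨c, hc⟩ := cofactor q' (brA y q') hqm' hbry_mem hbrydeg
  have hkey2 : cmap (⇑α) r * X = C c * r := by
    apply hcomp_inj
    simp only [mul_comp, C_comp, X_comp]
    rw [← hbry_eq, hc, hq'r]
  have hc0 : c * r.coeff 0 = 0 := by
    have h := congrArg (fun u => Polynomial.coeff u 0) hkey2
    simpa [Polynomial.mul_coeff_zero] using h.symm
  have hchain : ∀ i : ℕ, α (r.coeff i) = c * r.coeff (i + 1) := by
    intro i
    have h := congrArg (fun u => Polynomial.coeff u (i + 1)) hkey2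
    simpa [coeff_mul_X, cmap_coeff (⇑α) (map_zero α)] using h
  by_cases h0 : r.coeff 0 = 0
  · -- y divides q', hence P' = span {y}
    obtain ⟨w, hw⟩ := X_dvd_iff.mpr h0
    have hyq : q' = y * w.comp y := by
      rw [hq'r, hw, mul_comp, X_comp]
    have hq'ne : q' ≠ 0 := hqm'.ne_zero
    have hq'prime : Prime q' := (Ideal.span_singleton_prime hq'ne).mp (hPspan' ▸ hP')
    have hynotunit : ¬ IsUnit y := not_isUnit_of_natDegree_pos y (by omega)
    rcases hq'prime.irreducible.isUnit_or_isUnit hyq with hu | hu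
    · exact absurd hu hynotunit
    · rw [hPspan', Ideal.span_singleton_eq_span_singleton, hyq]
      exact associated_mul_unit_left y _ hu
  · exfalso
    have hcz : c = 0 := by
      rcases mul_eq_zero.mp hc0 with h | h
      · exact h
      · exact absurd h h0
    have hzero : ∀ i : ℕ, i < n → r.coeff i = 0 := by
      intro i hi
      have h1 := hchain i
      rw [hcz, zero_mul] at h1
      have h2 := hrel2 i
      rw [h1] at h2
      have hne : σ * ((n : B) - (i : B)) ≠ 0 := by
        apply mul_ne_zero hσ0
        have : ((n : B) - (i : B)) = ((n - i : ℕ) : B) :=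
          (Nat.cast_sub (le_of_lt hi)).symm
        rw [this]
        exact Nat.cast_ne_zero.mpr (by omega)
      rcases mul_eq_zero.mp h2.symm with h | h
      · exact absurd h hne
      · exact h
    exact h0 (hzero 0 (by omega))
end

section
/- Let Γ = ℤ^n, let b : Γ × Γ → k be an antisymmetric bilinear form, and let k_bΓ be the group algebra kΓ with Poisson bracket {x^α, x^β} = b(α,β) x^{α+β}. If the radical Γ_b = {α ∈ Γ : b(α,−) ≡ 0} is trivial (equivalently, the Poisson center of k_bΓ equals k), then k_bΓ is Poisson simple: its only Poisson ideals are 0 and k_bΓ. -/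
/-- Corollary 3.3: if the radical `Γ_b` of the antisymmetric bilinear form `b`
on `Γ = ℤ^n` is trivial (equivalently, the Poisson center of `k_bΓ` is `k`),
then `k_bΓ` is Poisson simple. -/
theorem statement5 (k : Type*) [Field k] [CharZero k] (n : ℕ)
    (b : (Fin n → ℤ) → (Fin n → ℤ) → k)
    (hbadd₁ : ∀ x y z : Fin n → ℤ, b (x + y) z = b x z + b y z)
    (hbadd₂ : ∀ x y z : Fin n → ℤ, b x (y + z) = b x y + b x z)
    (hbanti : ∀ x y : Fin n → ℤ, b x y = - b y x)
    (br : AddMonoidAlgebra k (Fin n → ℤ) → AddMonoidAlgebra k (Fin n → ℤ) →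
      AddMonoidAlgebra k (Fin n → ℤ))
    (hbr : IsPoissonBracket k br)
    (hmono : ∀ x y : Fin n → ℤ,
      br (AddMonoidAlgebra.single x (1 : k)) (AddMonoidAlgebra.single y (1 : k))
        = b x y • AddMonoidAlgebra.single (x + y) (1 : k))
    -- triviality of the radical `Γ_b`
    (hrad : ∀ x : Fin n → ℤ, (∀ y, b x y = 0) → x = 0)
    (I : Ideal (AddMonoidAlgebra k (Fin n → ℤ)))
    (hI : ∀ x y : AddMonoidAlgebra k (Fin n → ℤ), y ∈ I → br x y ∈ I) :
    I = ⊥ ∨ I = ⊤ := by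
  classical
  by_cases hbot : I = ⊥
  · exact Or.inl hbot
  right
  -- basic facts about b
  have hb0 : ∀ x : Fin n → ℤ, b x 0 = 0 := by
    intro x
    have h := hbadd₂ x 0 0
    rw [add_zero] at h
    linear_combination -h
  have hbneg : ∀ x y : Fin n → ℤ, b x (-y) = - b x y := by
    intro x y
    have h := hbadd₂ x y (-y)
    rw [add_neg_cancel, hb0] at h
    linear_combination -h
  -- basic facts about br
  have hbr0 : ∀ u, br u (0 : AddMonoidAlgebra k (Fin n → ℤ)) = 0 := by
    intro u
    have h := hbr.2.1 u 0 0
    rw [add_zero] at h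
    exact (add_eq_left.mp h.symm)
  have hbrsmul : ∀ (r : k) (u v : AddMonoidAlgebra k (Fin n → ℤ)),
      br u (r • v) = r • br u v := by
    intro r u v
    rw [hbr.2.2.2.1 u (r • v), hbr.2.2.1, hbr.2.2.2.1 v u]
    simp
  -- nonzero element of I exists
  obtain ⟨a0, ha0I, ha0⟩ : ∃ a ∈ I, a ≠ 0 := by
    by_contra h
    push_neg at h
    exact hbot ((Submodule.eq_bot_iff I).mpr h)
  -- minimal support
  set P : ℕ → Prop := fun m => ∃ a ∈ I, a ≠ 0 ∧ a.coeff.support.card = m with hP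
  have hPex : ∃ m, P m := ⟨a0.coeff.support.card, a0, ha0I, ha0, rfl⟩
  obtain ⟨a, haI, ha, hacard⟩ := Nat.find_spec hPex
  have hmin : ∀ m < Nat.find hPex, ¬ P m := fun m hm => Nat.find_min hPex hm
  obtain ⟨α₀, hα₀⟩ := Finsupp.support_nonempty_iff.mpr (AddMonoidAlgebra.coeff_eq_zero.not.mpr ha)
  have haα₀ : a.coeff α₀ ≠ 0 := Finsupp.mem_support_iff.mp hα₀
  -- decompose a as sum of singles
  have hbrsum : ∀ (u : AddMonoidAlgebra k (Fin n → ℤ)) (s : Finset (Fin n → ℤ))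
      (f : (Fin n → ℤ) → AddMonoidAlgebra k (Fin n → ℤ)),
      br u (∑ i ∈ s, f i) = ∑ i ∈ s, br u (f i) := fun u s f =>
    map_sum (AddMonoidHom.mk' (br u) (hbr.2.1 u)) f s
  have hasum : a = ∑ α ∈ a.coeff.support, AddMonoidAlgebra.single α (a.coeff α) :=
    (AddMonoidAlgebra.sum_coeff_single a).symm
  -- key: all support elements equal α₀
  have hkey : ∀ α ∈ a.coeff.support, α = α₀ := by
    intro α hα
    have hbx : ∀ x : Fin n → ℤ, b x α = b x α₀ := by
      intro x
      -- the element c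
      set c : AddMonoidAlgebra k (Fin n → ℤ) :=
        br (AddMonoidAlgebra.single x 1) a - b x α₀ • (AddMonoidAlgebra.single x 1 * a) with hc
      have hcI : c ∈ I := by
        apply I.sub_mem (hI _ _ haI)
        rw [Algebra.smul_def]
        exact I.mul_mem_left _ (I.mul_mem_left _ haI)
      -- compute c as a sum
      have hL : br (AddMonoidAlgebra.single x 1) a
          = ∑ β ∈ a.coeff.support, AddMonoidAlgebra.single (x + β) ((a.coeff β) * b x β) := by
        conv_lhs => rw [hasum]
        rw [hbrsum]
        refine Finset.sum_congr rfl fun β _ => ?_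
        show br (AddMonoidAlgebra.single x 1) (AddMonoidAlgebra.single β (a.coeff β)) = _
        have : AddMonoidAlgebra.single β (a.coeff β) = (a.coeff β) • AddMonoidAlgebra.single β (1:k) := by
          rw [AddMonoidAlgebra.smul_single', mul_one]
        rw [this, hbrsmul, hmono, smul_smul, AddMonoidAlgebra.smul_single', mul_one]
      have hM : AddMonoidAlgebra.single x (1:k) * a
          = ∑ β ∈ a.coeff.support, AddMonoidAlgebra.single (x + β) (a.coeff β) := by
        conv_lhs => rw [hasum]
        rw [Finset.mul_sum]
        refine Finset.sum_congr rfl fun β _ => ?_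
        rw [AddMonoidAlgebra.single_mul_single, one_mul]
      have hcsum : c = ∑ β ∈ a.coeff.support,
          AddMonoidAlgebra.single (x + β) ((a.coeff β) * (b x β - b x α₀)) := by
        rw [hc, hL, hM, Finset.smul_sum, ← Finset.sum_sub_distrib]
        refine Finset.sum_congr rfl fun β _ => ?_
        rw [AddMonoidAlgebra.smul_single', ← AddMonoidAlgebra.single_sub]
        congr 1
        ring
      -- c vanishes at α₀'s slot, so support is small
      have hcsum' : c = ∑ β ∈ a.coeff.support \ {α₀},
          AddMonoidAlgebra.single (x + β) ((a.coeff β) * (b x β - b x α₀)) := by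
        rw [hcsum, ← Finset.sum_subset (Finset.sdiff_subset)]
        intro β hβ hβn
        have : β = α₀ := by
          by_contra hne
          exact hβn (Finset.mem_sdiff.mpr ⟨hβ, by simpa using hne⟩)
        subst this
        simp
      have hsupp : c.coeff.support ⊆ (a.coeff.support \ {α₀}).image (fun β => x + β) := by
        rw [hcsum']
        rw [AddMonoidAlgebra.coeff_sum]
        refine (Finsupp.support_finset_sum).trans ?_
        intro γ hγ
        simp only [Finset.mem_biUnion, AddMonoidAlgebra.coeff_single] at hγ
        obtain ⟨β, hβ, hγβ⟩ := hγ
        have := Finsupp.support_single_subset hγβ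
        simp only [Finset.mem_singleton] at this
        exact Finset.mem_image.mpr ⟨β, hβ, this.symm⟩
      have hcard : c.coeff.support.card < Nat.find hPex := by
        calc c.coeff.support.card ≤ ((a.coeff.support \ {α₀}).image (fun β => x + β)).card :=
              Finset.card_le_card hsupp
          _ ≤ (a.coeff.support \ {α₀}).card := Finset.card_image_le
          _ < a.coeff.support.card := by
              apply Finset.card_lt_card
              rw [Finset.ssubset_iff_of_subset Finset.sdiff_subset]
              exact ⟨α₀, hα₀, by simp⟩
          _ = Nat.find hPex := hacard
      have hc0 : c = 0 := by
        by_contra hcne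
        exact hmin _ hcard ⟨c, hcI, hcne, rfl⟩
      -- extract coefficient at x + α
      have := congrArg (fun f : AddMonoidAlgebra k (Fin n → ℤ) => f.coeff (x + α)) hcsum
      rw [hc0] at this
      simp only [AddMonoidAlgebra.coeff_zero, Finsupp.coe_zero, Pi.zero_apply] at this
      rw [AddMonoidAlgebra.coeff_sum, Finsupp.finset_sum_apply] at this
      have hzero : (0:k) = a.coeff α * (b x α - b x α₀) := by
        rw [this]
        rw [Finset.sum_eq_single α]
        · simp [AddMonoidAlgebra.coeff_single, Finsupp.single_apply]
        · intro β hβ hβα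
          rw [AddMonoidAlgebra.coeff_single, Finsupp.single_apply, if_neg]
          intro h
          exact hβα (by exact add_left_cancel h)
        · intro h; exact absurd hα h
      have haαne : a.coeff α ≠ 0 := Finsupp.mem_support_iff.mp hα
      have : b x α - b x α₀ = 0 := by
        rcases mul_eq_zero.mp hzero.symm with h | h
        · exact absurd h haαne
        · exact h
      exact sub_eq_zero.mp this
    -- conclude α = α₀ from the radical condition
    have : α - α₀ = 0 := by
      apply hrad
      intro y
      rw [hbanti]
      have : b y (α - α₀) = b y α - b y α₀ := by
        rw [sub_eq_add_neg, hbadd₂, hbneg]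
        ring
      rw [this, hbx y]
      ring
    exact sub_eq_zero.mp this
  -- so a is a single monomial
  have haone : a = AddMonoidAlgebra.single α₀ (a.coeff α₀) := by
    ext β
    by_cases hβ : β = α₀
    · subst hβ; rw [AddMonoidAlgebra.coeff_single, Finsupp.single_apply, if_pos rfl]
    · rw [AddMonoidAlgebra.coeff_single, Finsupp.single_apply, if_neg (fun h => hβ h.symm)]
      by_contra hne
      exact hβ (hkey β (Finsupp.mem_support_iff.mpr hne))
  -- a is a unit
  have hunit : a * AddMonoidAlgebra.single (-α₀) (a.coeff α₀)⁻¹ = 1 := by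
    nth_rewrite 1 [haone]
    rw [AddMonoidAlgebra.single_mul_single, add_neg_cancel,
      mul_inv_cancel₀ haα₀, AddMonoidAlgebra.one_def]
  rw [Ideal.eq_top_iff_one]
  rw [← hunit]
  exact I.mul_mem_right _ haI
end

section
/- Let Γ = ℤ^n and b : Γ × Γ → k an antisymmetric bilinear form, and let k_bΓ = k[x_1^{±1},…,x_n^{±1}] carry the Poisson bracket {x^α, x^β} = b(α,β)x^{α+β}. Then the Poisson center of k_bΓ equals the span of the monomials x^α with α ∈ Γ_b = {α : b(α,−) ≡ 0}, and every Poisson ideal of k_bΓ is generated by its intersection with the Poisson center. -/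
namespace Statement6Aux

variable {k : Type*} [Field k] {n : ℕ}


section bform
variable (b : (Fin n → ℤ) → (Fin n → ℤ) → k)
  (hbadd₁ : ∀ x y z : Fin n → ℤ, b (x + y) z = b x z + b y z)
  (hbadd₂ : ∀ x y z : Fin n → ℤ, b x (y + z) = b x y + b x z)

include hbadd₁ in
theorem b_zero_left (y : (Fin n → ℤ)) : b 0 y = 0 := by
  have := hbadd₁ 0 0 y; simpa using this

include hbadd₂ in
theorem b_zero_right (x : (Fin n → ℤ)) : b x 0 = 0 := by
  have := hbadd₂ x 0 0; simpa using this

include hbadd₁ in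
theorem b_neg_left (x y : (Fin n → ℤ)) : b (-x) y = - b x y := by
  have h := hbadd₁ x (-x) y
  rw [add_neg_cancel, b_zero_left b hbadd₁] at h
  linear_combination -h

include hbadd₁ in
theorem b_sub_left (x x' y : (Fin n → ℤ)) : b (x - x') y = b x y - b x' y := by
  rw [sub_eq_add_neg, hbadd₁, b_neg_left b hbadd₁, sub_eq_add_neg]

end bform

section bracket

variable (b : (Fin n → ℤ) → (Fin n → ℤ) → k)
  (br : AddMonoidAlgebra k (Fin n → ℤ) → AddMonoidAlgebra k (Fin n → ℤ) →
      AddMonoidAlgebra k (Fin n → ℤ))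
  (h1 : ∀ u v w : AddMonoidAlgebra k (Fin n → ℤ), br (u + v) w = br u w + br v w)
  (h2 : ∀ u v w : AddMonoidAlgebra k (Fin n → ℤ), br u (v + w) = br u v + br u w)
  (h3 : ∀ (r : k) (u v : AddMonoidAlgebra k (Fin n → ℤ)), br (r • u) v = r • br u v)
  (h4 : ∀ u v : AddMonoidAlgebra k (Fin n → ℤ), br u v = - br v u)
  (hmono : ∀ x y : Fin n → ℤ,
      br (AddMonoidAlgebra.single x (1 : k)) (AddMonoidAlgebra.single y (1 : k))
        = b x y • AddMonoidAlgebra.single (x + y) (1 : k))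

include h1 in
theorem br_zero_left (a : AddMonoidAlgebra k (Fin n → ℤ)) : br 0 a = 0 := by
  have h := h1 0 0 a
  rw [add_zero] at h
  exact (left_eq_add.mp h)

include h1 h4 in
theorem br_zero_right (a : AddMonoidAlgebra k (Fin n → ℤ)) : br a 0 = 0 := by
  rw [h4, br_zero_left br h1, neg_zero]

include h3 h4 in
theorem br_smul_right (r : k) (a c : AddMonoidAlgebra k (Fin n → ℤ)) : br a (r • c) = r • br a c := by
  rw [h4, h3, h4 a c, smul_neg]

include h3 h4 hmono in
theorem br_single_single (x y : (Fin n → ℤ)) (c d : k) :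
    br (AddMonoidAlgebra.single x c) (AddMonoidAlgebra.single y d)
      = AddMonoidAlgebra.single (x + y) (c * d * b x y) := by
  have hx : (AddMonoidAlgebra.single x c : AddMonoidAlgebra k (Fin n → ℤ)) = c • AddMonoidAlgebra.single x 1 := by
    rw [AddMonoidAlgebra.smul_single, smul_eq_mul, mul_one]
  have hy : (AddMonoidAlgebra.single y d : AddMonoidAlgebra k (Fin n → ℤ)) = d • AddMonoidAlgebra.single y 1 := by
    rw [AddMonoidAlgebra.smul_single, smul_eq_mul, mul_one]
  rw [hx, hy, h3, br_smul_right br h3 h4, hmono, smul_smul, smul_smul,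
    AddMonoidAlgebra.smul_single, smul_eq_mul, mul_one, mul_assoc]

include h1 h2 h3 h4 hmono in
theorem br_single_left (x : (Fin n → ℤ)) (f : AddMonoidAlgebra k (Fin n → ℤ)) :
    br (AddMonoidAlgebra.single x (1 : k)) f
      = f.coeff.sum fun α c => AddMonoidAlgebra.single (x + α) (b x α * c) := by
  induction f using AddMonoidAlgebra.induction_linear with
  | zero => rw [br_zero_right br h1 h4, AddMonoidAlgebra.coeff_zero, Finsupp.sum_zero_index]
  | add f g hf hg =>
      rw [h2, hf, hg, AddMonoidAlgebra.coeff_add, Finsupp.sum_add_index]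
      · intro α _; simp
      · intro α _ c d; rw [mul_add]; exact AddMonoidAlgebra.single_add _ _ _
  | single y d =>
      rw [br_single_single b br h3 h4 hmono, AddMonoidAlgebra.sum_single_index]
      · rw [one_mul, mul_comm]
      · simp

include h1 in
theorem br_sum_left {ι : Type*} (t : Finset ι) (g : ι → AddMonoidAlgebra k (Fin n → ℤ)) (a : AddMonoidAlgebra k (Fin n → ℤ)) :
    br (∑ i ∈ t, g i) a = ∑ i ∈ t, br (g i) a := by
  classical
  induction t using Finset.induction with
  | empty => simpa using br_zero_left br h1 a
  | insert _ _ hx ih =>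
      rw [Finset.sum_insert hx, h1, ih, Finset.sum_insert hx]

include h1 h2 h3 h4 hmono in
theorem central_of_support (f : AddMonoidAlgebra k (Fin n → ℤ)) (hf : ∀ α ∈ f.coeff.support, ∀ y, b α y = 0) (a : AddMonoidAlgebra k (Fin n → ℤ)) :
    br f a = 0 := by
  classical
  conv_lhs => rw [← AddMonoidAlgebra.sum_coeff_single f]
  rw [Finsupp.sum, br_sum_left br h1]
  refine Finset.sum_eq_zero fun α hα => ?_
  have hs : (AddMonoidAlgebra.single α (f.coeff α) : AddMonoidAlgebra k (Fin n → ℤ)) = (f.coeff α) • AddMonoidAlgebra.single α 1 := by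
    rw [AddMonoidAlgebra.smul_single, smul_eq_mul, mul_one]
  rw [hs, h3]
  have hz : br (AddMonoidAlgebra.single α (1:k)) a = 0 := by
    rw [br_single_left b br h1 h2 h3 h4 hmono]
    rw [Finsupp.sum]
    refine Finset.sum_eq_zero fun y _ => ?_
    rw [hf α hα y, zero_mul]
    exact AddMonoidAlgebra.single_zero _
  rw [hz, smul_zero]

include h1 h2 h3 h4 hmono in
theorem support_central (hbanti : ∀ x y : Fin n → ℤ, b x y = - b y x)
    (z : AddMonoidAlgebra k (Fin n → ℤ)) (hz : ∀ a, br z a = 0) :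
    ∀ α ∈ z.coeff.support, ∀ y, b α y = 0 := by
  classical
  intro α₀ hα₀ y
  have h0 := hz (AddMonoidAlgebra.single y (1:k))
  rw [h4, br_single_left b br h1 h2 h3 h4 hmono, neg_eq_zero] at h0
  have hc := congrArg (fun g : AddMonoidAlgebra k (Fin n → ℤ) => g.coeff (y + α₀)) h0
  simp only [AddMonoidAlgebra.coeff_zero, Finsupp.coe_zero, Pi.zero_apply] at hc
  rw [Finsupp.sum, AddMonoidAlgebra.coeff_sum, Finset.sum_apply'] at hc
  simp only [AddMonoidAlgebra.coeff_single] at hc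
  rw [Finset.sum_eq_single_of_mem α₀ hα₀ (fun α _ hne =>
    Finsupp.single_eq_of_ne' (fun h => hne (add_left_cancel h)))] at hc
  rw [Finsupp.single_eq_same] at hc
  have hzα : z.coeff α₀ ≠ 0 := Finsupp.mem_support_iff.mp hα₀
  have hby : b y α₀ = 0 := by
    rcases mul_eq_zero.mp hc with h | h
    · exact h
    · exact absurd h hzα
  rw [hbanti, hby, neg_zero]

variable (hbadd₁ : ∀ x y z : Fin n → ℤ, b (x + y) z = b x z + b y z)
  (hbanti : ∀ x y : Fin n → ℤ, b x y = - b y x)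

/-- The scaled derivation `f ↦ x^{-γ} {x^γ, f}`, coefficientwise
multiplication by `b γ ·`. -/
noncomputable def Eop (b : (Fin n → ℤ) → (Fin n → ℤ) → k) (γ : Fin n → ℤ)
    (f : AddMonoidAlgebra k (Fin n → ℤ)) : AddMonoidAlgebra k (Fin n → ℤ) :=
  f.coeff.sum fun α c => AddMonoidAlgebra.single α (b γ α * c)

theorem Eop_apply (γ β : Fin n → ℤ) (f : AddMonoidAlgebra k (Fin n → ℤ)) :
    (Eop b γ f).coeff β = b γ β * f.coeff β := by
  classical
  rw [Eop, Finsupp.sum, AddMonoidAlgebra.coeff_sum, Finset.sum_apply']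
  simp only [AddMonoidAlgebra.coeff_single]
  by_cases hβ : β ∈ f.coeff.support
  · rw [Finset.sum_eq_single_of_mem β hβ (fun α _ hne => Finsupp.single_eq_of_ne' hne),
      Finsupp.single_eq_same]
  · rw [Finsupp.notMem_support_iff.mp hβ, mul_zero]
    exact Finset.sum_eq_zero fun α hα => Finsupp.single_eq_of_ne' (fun h => hβ (h ▸ hα))

include h1 h2 h3 h4 hmono in
theorem Eop_eq (γ : Fin n → ℤ) (f : AddMonoidAlgebra k (Fin n → ℤ)) :
    Eop b γ f = AddMonoidAlgebra.single (-γ) (1:k) * br (AddMonoidAlgebra.single γ (1:k)) f := by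
  rw [br_single_left b br h1 h2 h3 h4 hmono, Eop, Finsupp.sum, Finsupp.sum, Finset.mul_sum]
  refine Finset.sum_congr rfl fun α _ => ?_
  rw [AddMonoidAlgebra.single_mul_single, one_mul, neg_add_cancel_left]

include h1 h2 h3 h4 hmono in
theorem Eop_mem (I : Ideal (AddMonoidAlgebra k (Fin n → ℤ)))
    (hI : ∀ x y : AddMonoidAlgebra k (Fin n → ℤ), y ∈ I → br x y ∈ I)
    (γ : Fin n → ℤ) (f : AddMonoidAlgebra k (Fin n → ℤ)) (hf : f ∈ I) : Eop b γ f ∈ I := by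
  rw [Eop_eq b br h1 h2 h3 h4 hmono]
  exact I.mul_mem_left _ (hI _ _ hf)

theorem Eop_iter_apply (γ β : Fin n → ℤ) (f : AddMonoidAlgebra k (Fin n → ℤ)) (m : ℕ) :
    ((Eop b γ)^[m] f).coeff β = (b γ β)^m * f.coeff β := by
  induction m with
  | zero => simp
  | succ m ih =>
      rw [Function.iterate_succ_apply', Eop_apply, ih, pow_succ]; ring

include h1 h2 h3 h4 hmono in
theorem Eop_iter_mem (I : Ideal (AddMonoidAlgebra k (Fin n → ℤ)))
    (hI : ∀ x y : AddMonoidAlgebra k (Fin n → ℤ), y ∈ I → br x y ∈ I)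
    (γ : Fin n → ℤ) (f : AddMonoidAlgebra k (Fin n → ℤ)) (hf : f ∈ I) (m : ℕ) :
    (Eop b γ)^[m] f ∈ I := by
  induction m with
  | zero => simpa using hf
  | succ m ih =>
      rw [Function.iterate_succ_apply']
      exact Eop_mem b br h1 h2 h3 h4 hmono I hI γ _ ih

include hbadd₁ hbanti h1 h2 h3 h4 hmono in
theorem main_ind (I : Ideal (AddMonoidAlgebra k (Fin n → ℤ)))
    (hI : ∀ x y : AddMonoidAlgebra k (Fin n → ℤ), y ∈ I → br x y ∈ I) :
    ∀ N : ℕ, ∀ f : AddMonoidAlgebra k (Fin n → ℤ), f ∈ I → f.coeff.support.card ≤ N →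
      f ∈ Ideal.span ((I : Set (AddMonoidAlgebra k (Fin n → ℤ))) ∩
        {z | ∀ a, br z a = 0}) := by
  classical
  intro N
  induction N with
  | zero =>
      intro f _ hcard
      have hf0 : f = 0 := AddMonoidAlgebra.coeff_eq_zero.mp <|
        Finsupp.support_eq_empty.mp (Finset.card_eq_zero.mp (Nat.le_zero.mp hcard))
      rw [hf0]; exact zero_mem _
  | succ N ih =>
    intro f hf hcard
    by_cases hf0 : f = 0
    · rw [hf0]; exact zero_mem _
    obtain ⟨α₀, hα₀⟩ := Finsupp.support_nonempty_iff.mpr (mt AddMonoidAlgebra.coeff_eq_zero.mp hf0)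
    by_cases hA : ∀ α ∈ f.coeff.support, ∀ y, b (α - α₀) y = 0
    · -- all exponents in the same coset of the radical
      set z := AddMonoidAlgebra.single (-α₀) (1:k) * f with hzdef
      have hzI : z ∈ I := I.mul_mem_left _ hf
      have hzsupp : ∀ α ∈ z.coeff.support, ∀ y, b α y = 0 := by
        intro α hα y
        have hzα : z.coeff α ≠ 0 := Finsupp.mem_support_iff.mp hα
        rw [hzdef, AddMonoidAlgebra.coeff_single_mul_apply, one_mul, neg_neg] at hzα
        have hmem : α₀ + α ∈ f.coeff.support := Finsupp.mem_support_iff.mpr hzα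
        have h := hA _ hmem y
        rwa [show α₀ + α - α₀ = α by abel] at h
      have hzC : ∀ a, br z a = 0 := central_of_support b br h1 h2 h3 h4 hmono z hzsupp
      have hfz : f = AddMonoidAlgebra.single α₀ (1:k) * z := by
        rw [hzdef, ← mul_assoc, AddMonoidAlgebra.single_mul_single, add_neg_cancel, mul_one,
          ← AddMonoidAlgebra.one_def, one_mul]
      rw [hfz]
      exact Ideal.mul_mem_left _ _ (Ideal.subset_span ⟨hzI, hzC⟩)
    · -- at least two distinct eigenvalues
      push_neg at hA
      obtain ⟨α₁, hα₁, γ, hγ⟩ := hA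
      have hvne : b γ α₁ ≠ b γ α₀ := by
        intro h
        apply hγ
        rw [b_sub_left b hbadd₁, hbanti α₁ γ, hbanti α₀ γ, h]; ring
      set s : Finset k := f.coeff.support.image (b γ) with hs
      have key : ∀ μ ∈ s,
          (∑ β ∈ f.coeff.support.filter (fun β => b γ β = μ), AddMonoidAlgebra.single β (f.coeff β))
            ∈ Ideal.span ((I : Set (AddMonoidAlgebra k (Fin n → ℤ))) ∩
              {z | ∀ a, br z a = 0}) := by
        intro μ hμ
        set fμ : AddMonoidAlgebra k (Fin n → ℤ) :=
          ∑ β ∈ f.coeff.support.filter (fun β => b γ β = μ), AddMonoidAlgebra.single β (f.coeff β)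
          with hfμdef
        have hfμ_apply : ∀ β, fμ.coeff β = if b γ β = μ ∧ β ∈ f.coeff.support then f.coeff β else 0 := by
          intro β
          rw [hfμdef, AddMonoidAlgebra.coeff_sum, Finset.sum_apply']
          simp only [AddMonoidAlgebra.coeff_single]
          by_cases hb : β ∈ f.coeff.support.filter (fun β => b γ β = μ)
          · rw [Finset.sum_eq_single_of_mem β hb (fun β' _ hne => Finsupp.single_eq_of_ne' hne),
              Finsupp.single_eq_same]
            simp only [Finset.mem_filter] at hb
            rw [if_pos ⟨hb.2, hb.1⟩]
          · rw [Finset.sum_eq_zero fun β' hβ' => Finsupp.single_eq_of_ne' (fun h => hb (by rw [← h]; exact hβ'))]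
            simp only [Finset.mem_filter] at hb
            rw [if_neg (fun hcon => hb ⟨hcon.2, hcon.1⟩)]
        set p := Lagrange.interpolate s id (fun ν => if ν = μ then (1:k) else 0) with hp
        set g : AddMonoidAlgebra k (Fin n → ℤ) :=
          ∑ j ∈ p.support, p.coeff j • (Eop b γ)^[j] f with hg
        have hg_apply : ∀ β, g.coeff β = p.eval (b γ β) * f.coeff β := by
          intro β
          rw [hg, AddMonoidAlgebra.coeff_sum, Finset.sum_apply', Polynomial.eval_eq_sum, Polynomial.sum_def,
            Finset.sum_mul]
          refine Finset.sum_congr rfl fun j _ => ?_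
          rw [AddMonoidAlgebra.coeff_smul_apply, Eop_iter_apply, smul_eq_mul]; ring
        have hgI : g ∈ I := Submodule.sum_mem _ fun j _ => by
          rw [Algebra.smul_def]
          exact I.mul_mem_left _ (Eop_iter_mem b br h1 h2 h3 h4 hmono I hI γ f hf j)
        have hnode : ∀ β ∈ f.coeff.support,
            Polynomial.eval (b γ β) p = if b γ β = μ then (1:k) else 0 := by
          intro β hβ
          have hmem : b γ β ∈ s := by rw [hs]; exact Finset.mem_image_of_mem _ hβ
          exact Lagrange.eval_interpolate_at_node (v := id)
            (fun ν => if ν = μ then (1:k) else 0) (Set.injOn_id _) hmem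
        have hgfμ : g = fμ := by
          ext β
          rw [hg_apply, hfμ_apply]
          by_cases hβ : β ∈ f.coeff.support
          · rw [hnode β hβ]
            by_cases hbγ : b γ β = μ
            · rw [if_pos hbγ, if_pos ⟨hbγ, hβ⟩, one_mul]
            · rw [if_neg hbγ, if_neg (fun h => hbγ h.1), zero_mul]
          · rw [Finsupp.notMem_support_iff.mp hβ, mul_zero, if_neg (fun h => hβ h.2)]
        have hsub : fμ.coeff.support ⊆ f.coeff.support.filter (fun β => b γ β = μ) := by
          intro β hβ
          have hne := Finsupp.mem_support_iff.mp hβ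
          rw [hfμ_apply] at hne
          by_contra hc
          simp only [Finset.mem_filter] at hc
          rw [if_neg (fun h => hc ⟨h.2, h.1⟩)] at hne
          exact hne rfl
        have hlt : (f.coeff.support.filter (fun β => b γ β = μ)).card < f.coeff.support.card := by
          apply Finset.card_lt_card
          constructor
          · exact Finset.filter_subset _ _
          · intro hsup
            by_cases hb0 : b γ α₀ = μ
            · exact hvne ((Finset.mem_filter.mp (hsup hα₁)).2.trans hb0.symm)
            · exact hb0 (Finset.mem_filter.mp (hsup hα₀)).2
        refine ih fμ (hgfμ ▸ hgI) ?_
        have h1' := Finset.card_le_card hsub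
        omega
      have hsumf : (∑ μ ∈ s, ∑ β ∈ f.coeff.support.filter fun β => b γ β = μ,
          AddMonoidAlgebra.single β (f.coeff β)) = f := by
        have hfib : (∑ μ ∈ s, ∑ β ∈ f.coeff.support.filter fun β => b γ β = μ,
            AddMonoidAlgebra.single β (f.coeff β)) = ∑ β ∈ f.coeff.support, AddMonoidAlgebra.single β (f.coeff β) :=
          Finset.sum_fiberwise_of_maps_to
            (fun β hβ => by rw [hs]; exact Finset.mem_image_of_mem _ hβ) _
        rw [hfib]
        have h := AddMonoidAlgebra.sum_coeff_single f
        rwa [Finsupp.sum] at h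
      rw [← hsumf]
      exact Submodule.sum_mem _ key

end bracket
end Statement6Aux

/-- Lemma 3.2: the Poisson center of `k_bΓ` is the span of the monomials `x^α`
with `α` in the radical `Γ_b`, and every Poisson ideal of `k_bΓ` is generated
by its intersection with the Poisson center. -/
theorem statement6 (k : Type*) [Field k] [CharZero k] (n : ℕ)
    (b : (Fin n → ℤ) → (Fin n → ℤ) → k)
    (hbadd₁ : ∀ x y z : Fin n → ℤ, b (x + y) z = b x z + b y z)
    (hbadd₂ : ∀ x y z : Fin n → ℤ, b x (y + z) = b x y + b x z)
    (hbanti : ∀ x y : Fin n → ℤ, b x y = - b y x)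
    (br : AddMonoidAlgebra k (Fin n → ℤ) → AddMonoidAlgebra k (Fin n → ℤ) →
      AddMonoidAlgebra k (Fin n → ℤ))
    (hbr : IsPoissonBracket k br)
    (hmono : ∀ x y : Fin n → ℤ,
      br (AddMonoidAlgebra.single x (1 : k)) (AddMonoidAlgebra.single y (1 : k))
        = b x y • AddMonoidAlgebra.single (x + y) (1 : k)) :
    -- the Poisson center is spanned by the monomials indexed by the radical
    (∀ z : AddMonoidAlgebra k (Fin n → ℤ),
      (∀ a, br z a = 0) ↔
        z ∈ Submodule.span k
          ((fun x : Fin n → ℤ => AddMonoidAlgebra.single x (1 : k)) ''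
            {x | ∀ y, b x y = 0})) ∧
    -- every Poisson ideal is generated by its intersection with the center
    (∀ I : Ideal (AddMonoidAlgebra k (Fin n → ℤ)),
      (∀ x y : AddMonoidAlgebra k (Fin n → ℤ), y ∈ I → br x y ∈ I) →
      I = Ideal.span ((I : Set (AddMonoidAlgebra k (Fin n → ℤ))) ∩
        {z | ∀ a, br z a = 0})) := by
  classical
  obtain ⟨h1, h2, h3, h4, h5, h6⟩ := hbr
  -- the Poisson center as a submodule
  let C : Submodule k (AddMonoidAlgebra k (Fin n → ℤ)) :=
    { carrier := {z | ∀ a, br z a = 0}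
      zero_mem' := fun a => Statement6Aux.br_zero_left br h1 a
      add_mem' := fun {u v} hu hv a => by rw [h1, hu a, hv a, add_zero]
      smul_mem' := fun r {u} hu a => by rw [h3, hu a, smul_zero] }
  constructor
  · intro z
    constructor
    · intro hz
      have hsupp := Statement6Aux.support_central b br h1 h2 h3 h4 hmono hbanti z hz
      have h := AddMonoidAlgebra.sum_coeff_single z
      rw [Finsupp.sum] at h
      rw [← h]
      refine Submodule.sum_mem _ fun α hα => ?_
      have hss : (AddMonoidAlgebra.single α (z.coeff α) : AddMonoidAlgebra k (Fin n → ℤ))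
          = z.coeff α • AddMonoidAlgebra.single α 1 := by
        rw [AddMonoidAlgebra.smul_single, smul_eq_mul, mul_one]
      rw [hss]
      exact Submodule.smul_mem _ _ (Submodule.subset_span ⟨α, hsupp α hα, rfl⟩)
    · intro hz
      have hSC : ((fun x : Fin n → ℤ => AddMonoidAlgebra.single x (1 : k)) ''
          {x | ∀ y, b x y = 0}) ⊆ (C : Set (AddMonoidAlgebra k (Fin n → ℤ))) := by
        rintro _ ⟨α, hα, rfl⟩
        intro a
        refine Statement6Aux.central_of_support b br h1 h2 h3 h4 hmono _ ?_ a
        intro β hβ y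
        have hβα : β = α := Finset.mem_singleton.mp (Finsupp.support_single_subset hβ)
        rw [hβα]
        exact hα y
      exact Submodule.span_le.mpr hSC hz
  · intro I hI
    apply le_antisymm
    · intro f hf
      exact Statement6Aux.main_ind b br h1 h2 h3 h4 hmono hbadd₁ hbanti I hI
        f.coeff.support.card f hf le_rfl
    · exact Ideal.span_le.mpr fun x hx => hx.1
end

section
/- Let A = B[x; α, δ]_p be a Poisson polynomial algebra over a field k of characteristic zero, with δ locally nilpotent and αδ = δ(α + s) for some nonzero s ∈ k. Then the map θ : B → B[x^{±1}] defined by θ(b) = Σ_{n≥0} (1/n!)(−1/s)^n δ^n(b) x^{−n} is a k-algebra homomorphism. -/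
open Finset LaurentPolynomial

section Aux

variable {k : Type*} [Field k] [CharZero k] {B : Type*} [CommRing B] [Algebra k B]

omit [CharZero k] in
lemma iter_zero (δ : Derivation k B B) (n : ℕ) : (⇑δ)^[n] (0 : B) = 0 :=
  Function.iterate_fixed (map_zero δ) n

omit [CharZero k] in
lemma iter_add (δ : Derivation k B B) (a b : B) (n : ℕ) :
    (⇑δ)^[n] (a + b) = (⇑δ)^[n] a + (⇑δ)^[n] b := by
  induction n generalizing a b with
  | zero => rfl
  | succ n ih => simp [Function.iterate_succ_apply, map_add, ih]

omit [CharZero k] in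
lemma iter_eventually_zero (δ : Derivation k B B) {b : B} {N : ℕ}
    (h : (⇑δ)^[N] b = 0) {n : ℕ} (hn : N ≤ n) : (⇑δ)^[n] b = 0 := by
  obtain ⟨j, rfl⟩ := Nat.exists_eq_add_of_le hn
  rw [add_comm, Function.iterate_add_apply, h, iter_zero]

omit [CharZero k] in
lemma iter_leibniz (δ : Derivation k B B) (a b : B) (n : ℕ) :
    (⇑δ)^[n] (a * b) =
      ∑ i ∈ range (n + 1), n.choose i • ((⇑δ)^[n - i] a * (⇑δ)^[i] b) := by
  induction n with
  | zero => simp [Finset.range]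
  | succ n IH =>
    calc
      (⇑δ)^[n + 1] (a * b) =
          δ (∑ i ∈ range n.succ, n.choose i • ((⇑δ)^[n - i] a * (⇑δ)^[i] b)) := by
        rw [Function.iterate_succ_apply', IH]
      _ = (∑ i ∈ range n.succ,
            n.choose i • ((⇑δ)^[n - i + 1] a * (⇑δ)^[i] b)) +
          ∑ i ∈ range n.succ,
            n.choose i • ((⇑δ)^[n - i] a * (⇑δ)^[i + 1] b) := by
        rw [map_sum, ← sum_add_distrib]
        simp_rw [Function.iterate_succ_apply']
        refine sum_congr rfl fun i _ => ?_
        have : δ (n.choose i • ((⇑δ)^[n - i] a * (⇑δ)^[i] b))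
            = n.choose i • δ ((⇑δ)^[n - i] a * (⇑δ)^[i] b) :=
          map_nsmul δ.toLinearMap _ _
        rw [this, Derivation.leibniz, smul_eq_mul, smul_eq_mul, smul_add]
        ring_nf
      _ = (∑ i ∈ range n.succ,
                n.choose i.succ • ((⇑δ)^[n - i] a * (⇑δ)^[i + 1] b)) +
              1 • ((⇑δ)^[n + 1] a * (⇑δ)^[0] b) +
            ∑ i ∈ range n.succ, n.choose i • ((⇑δ)^[n - i] a * (⇑δ)^[i + 1] b) := ?_
      _ = ((∑ i ∈ range n.succ, n.choose i • ((⇑δ)^[n - i] a * (⇑δ)^[i + 1] b)) +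
              ∑ i ∈ range n.succ,
                n.choose i.succ • ((⇑δ)^[n - i] a * (⇑δ)^[i + 1] b)) +
            1 • ((⇑δ)^[n + 1] a * (⇑δ)^[0] b) := by
        rw [add_comm, add_assoc]
      _ = (∑ i ∈ range n.succ,
              (n + 1).choose (i + 1) • ((⇑δ)^[n + 1 - (i + 1)] a * (⇑δ)^[i + 1] b)) +
            1 • ((⇑δ)^[n + 1] a * (⇑δ)^[0] b) := by
        simp_rw [Nat.choose_succ_succ, Nat.succ_sub_succ, add_smul, sum_add_distrib]
      _ = ∑ i ∈ range n.succ.succ,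
            n.succ.choose i • ((⇑δ)^[n.succ - i] a * (⇑δ)^[i] b) := by
        rw [sum_range_succ' _ n.succ, Nat.choose_zero_right, tsub_zero]
    congr
    refine (sum_range_succ' _ _).trans (congr_arg₂ (· + ·) ?_ ?_)
    · rw [sum_range_succ, Nat.choose_succ_self, zero_smul, add_zero]
      refine sum_congr rfl fun i hi => ?_
      rw [mem_range] at hi
      congr
      omega
    · rw [Nat.choose_zero_right, tsub_zero]

/-- The scalar coefficient `(-1/s)^n / n!`. -/
noncomputable def thetaC (s : k) (n : ℕ) : k := (-s⁻¹) ^ n / (n.factorial : k)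

lemma thetaC_mul {s : k} {i n : ℕ} (h : i ≤ n) :
    (n.choose i : k) * thetaC s n = thetaC s (n - i) * thetaC s i := by
  have h1 : (n.factorial : k) ≠ 0 := Nat.cast_ne_zero.2 n.factorial_ne_zero
  have h2 : (i.factorial : k) ≠ 0 := Nat.cast_ne_zero.2 i.factorial_ne_zero
  have h3 : ((n - i).factorial : k) ≠ 0 := Nat.cast_ne_zero.2 (n - i).factorial_ne_zero
  have h4 : (-s⁻¹) ^ (n - i) * (-s⁻¹) ^ i = (-s⁻¹) ^ n := by
    rw [← pow_add, Nat.sub_add_cancel h]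
  rw [Nat.cast_choose k h, thetaC, thetaC, thetaC, ← h4]
  field_simp

/-- The `n`-th term of the series defining `θ b`. -/
noncomputable def thetaT (δ : Derivation k B B) (s : k) (b : B) (n : ℕ) :
    LaurentPolynomial B :=
  thetaC s n • (C ((⇑δ)^[n] b) * T (-(n : ℤ)))

omit [CharZero k] in
lemma thetaT_eq_zero (δ : Derivation k B B) (s : k) {b : B} {N : ℕ}
    (h : (⇑δ)^[N] b = 0) {n : ℕ} (hn : N ≤ n) : thetaT δ s b n = 0 := by
  rw [thetaT, iter_eventually_zero δ h hn, map_zero, zero_mul, smul_zero]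

omit [CharZero k] in
lemma finsum_thetaT (δ : Derivation k B B) (s : k) {b : B} {N : ℕ}
    (h : (⇑δ)^[N] b = 0) :
    ∑ᶠ n, thetaT δ s b n = ∑ n ∈ range N, thetaT δ s b n := by
  refine finsum_eq_sum_of_support_subset _ fun n hn => ?_
  simp only [Function.mem_support] at hn
  by_contra hc
  exact hn (thetaT_eq_zero δ s h
    (Nat.le_of_not_lt fun hlt => hc (Finset.mem_coe.2 (mem_range.2 hlt))))

end Aux

section Aux2

variable {k : Type*} [Field k] [CharZero k] {B : Type*} [CommRing B] [Algebra k B]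

omit [CharZero k] in
lemma iter_mul_zero (δ : Derivation k B B) {a b : B} {Na Nb : ℕ}
    (ha : (⇑δ)^[Na] a = 0) (hb : (⇑δ)^[Nb] b = 0) :
    (⇑δ)^[Na + Nb] (a * b) = 0 := by
  rw [iter_leibniz]
  refine sum_eq_zero fun i hi => ?_
  rcases le_or_gt Nb i with h | h
  · rw [iter_eventually_zero δ hb h, mul_zero, smul_zero]
  · rw [iter_eventually_zero δ ha (by omega : Na ≤ Na + Nb - i), zero_mul, smul_zero]

lemma thetaT_mul (δ : Derivation k B B) (s : k) {a b : B} {Na Nb : ℕ}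
    (ha : (⇑δ)^[Na] a = 0) (hb : (⇑δ)^[Nb] b = 0) :
    (∑ m ∈ range (Na + Nb), thetaT δ s a m) * (∑ m ∈ range (Na + Nb), thetaT δ s b m)
      = ∑ m ∈ range (Na + Nb), thetaT δ s (a * b) m := by
  set L := Na + Nb with hL
  set f : ℕ → ℕ → LaurentPolynomial B := fun m j =>
    (thetaC s m * thetaC s j) •
      (C ((⇑δ)^[m] a * (⇑δ)^[j] b) * T (-(m : ℤ) + -(j : ℤ))) with hf
  have step1 : (∑ m ∈ range L, thetaT δ s a m) * (∑ m ∈ range L, thetaT δ s b m)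
      = ∑ m ∈ range L, ∑ j ∈ range L, f m j := by
    rw [sum_mul_sum]
    refine sum_congr rfl fun m _ => sum_congr rfl fun j _ => ?_
    rw [hf, thetaT, thetaT, smul_mul_smul_comm, mul_mul_mul_comm, ← map_mul, ← T_add]
  have step2 : ∑ m ∈ range L, ∑ j ∈ range L, f m j
      = ∑ m ∈ range L, ∑ j ∈ range (L - m), f m j := by
    refine sum_congr rfl fun m hm => ?_
    refine (sum_subset (range_subset_range.2 (Nat.sub_le _ _)) fun j hj hj' => ?_).symm
    rw [mem_range] at hj hj'
    rcases le_or_gt Na m with h | h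
    · rw [hf]
      simp [iter_eventually_zero δ ha h]
    · have hNb : Nb ≤ j := by omega
      rw [hf]
      simp [iter_eventually_zero δ hb hNb]
  have step3 : ∑ m ∈ range L, ∑ j ∈ range (L - m), f m j
      = ∑ m ∈ range L, ∑ i ∈ range (m + 1), f i (m - i) :=
    (sum_range_diag_flip L f).symm
  rw [step1, step2, step3]
  refine sum_congr rfl fun m _ => ?_
  have flip : ∑ i ∈ range (m + 1), f i (m - i)
      = ∑ i ∈ range (m + 1), f (m - i) i := by
    rw [← sum_range_reflect (fun i => f i (m - i)) (m + 1)]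
    refine sum_congr rfl fun i hi => ?_
    rw [mem_range, Nat.lt_succ_iff] at hi
    have h1 : m + 1 - 1 - i = m - i := by omega
    have h2 : m - (m - i) = i := Nat.sub_sub_self hi
    rw [h1, h2]
  rw [flip, thetaT, iter_leibniz, map_sum, sum_mul, smul_sum]
  refine sum_congr rfl fun i hi => ?_
  rw [mem_range, Nat.lt_succ_iff] at hi
  have hcast : (-(((m - i : ℕ) : ℤ)) + -(i : ℤ)) = -(m : ℤ) := by
    have : ((m - i : ℕ) : ℤ) = (m : ℤ) - (i : ℤ) := by
      push_cast [hi]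
      ring
    omega
  rw [hf]
  show (thetaC s (m - i) * thetaC s i) •
      (C ((⇑δ)^[m - i] a * (⇑δ)^[i] b) * T (-(((m - i : ℕ)) : ℤ) + -(i : ℤ)))
    = thetaC s m • (C (m.choose i • ((⇑δ)^[m - i] a * (⇑δ)^[i] b)) * T (-(m : ℤ)))
  rw [hcast, ← thetaC_mul hi, map_nsmul, smul_mul_assoc,
    ← Nat.cast_smul_eq_nsmul k, smul_smul, mul_comm (thetaC s m)]

end Aux2


open LaurentPolynomial in
/-- Lemma 3.5 (first part): for a Poisson polynomial algebra `A = B[x; α, δ]_p`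
with `δ` locally nilpotent and `αδ = δ(α + s)`, `s ≠ 0`, the map
`θ(b) = Σ_{n≥0} (1/n!)(−1/s)^n δ^n(b) x^{−n}` is a `k`-algebra homomorphism
`B → B[x^{±1}]`. -/
theorem statement8 (k : Type*) [Field k] [CharZero k]
    (B : Type*) [CommRing B] [Algebra k B]
    (brB : B → B → B) (hbrB : IsPoissonBracket k brB)
    (α : Derivation k B B)
    (hα : ∀ a b : B, α (brB a b) = brB (α a) b + brB a (α b))
    (δ : Derivation k B B)
    (hδ : ∀ a b : B, δ (brB a b)
      = brB (δ a) b + brB a (δ b) + α a * δ b - δ a * α b)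
    (hnil : ∀ b : B, ∃ m : ℕ, (⇑δ)^[m] b = 0)
    (s : k) (hs : s ≠ 0)
    (hcomm : ∀ b : B, α (δ b) = δ (α b) + s • δ b) :
    ∃ θ : B →ₐ[k] LaurentPolynomial B,
      ∀ b : B, θ b = ∑ᶠ m : ℕ,
        (((-s⁻¹) ^ m / (m.factorial : k))) • (C ((⇑δ)^[m] b) * T (-(m : ℤ))) := by
  refine ⟨{ toFun := fun b => ∑ᶠ n, thetaT δ s b n,
            map_one' := ?_, map_mul' := ?_, map_zero' := ?_, map_add' := ?_,
            commutes' := ?_ }, fun b => rfl⟩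
  · have h1 : (⇑δ)^[1] (1 : B) = 0 := by simpa using δ.map_one_eq_zero
    show (∑ᶠ n, thetaT δ s (1 : B) n) = 1
    rw [finsum_thetaT δ s h1, sum_range_one]
    simp [thetaT, thetaC]
  · intro a b
    obtain ⟨Na, ha⟩ := hnil a
    obtain ⟨Nb, hb⟩ := hnil b
    have ha' : (⇑δ)^[Na + Nb] a = 0 := iter_eventually_zero δ ha (Nat.le_add_right _ _)
    have hb' : (⇑δ)^[Na + Nb] b = 0 := iter_eventually_zero δ hb (Nat.le_add_left _ _)
    show (∑ᶠ n, thetaT δ s (a * b) n)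
        = (∑ᶠ n, thetaT δ s a n) * ∑ᶠ n, thetaT δ s b n
    rw [finsum_thetaT δ s (iter_mul_zero δ ha hb), finsum_thetaT δ s ha',
      finsum_thetaT δ s hb', thetaT_mul δ s ha hb]
  · have h0 : (⇑δ)^[0] (0 : B) = 0 := rfl
    show (∑ᶠ n, thetaT δ s (0 : B) n) = 0
    rw [finsum_thetaT δ s h0, sum_range_zero]
  · intro a b
    obtain ⟨Na, ha⟩ := hnil a
    obtain ⟨Nb, hb⟩ := hnil b
    set N := max Na Nb with hN
    have ha' : (⇑δ)^[N] a = 0 := iter_eventually_zero δ ha (le_max_left _ _)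
    have hb' : (⇑δ)^[N] b = 0 := iter_eventually_zero δ hb (le_max_right _ _)
    have hab : (⇑δ)^[N] (a + b) = 0 := by rw [iter_add, ha', hb', add_zero]
    show (∑ᶠ n, thetaT δ s (a + b) n)
        = (∑ᶠ n, thetaT δ s a n) + ∑ᶠ n, thetaT δ s b n
    rw [finsum_thetaT δ s hab, finsum_thetaT δ s ha', finsum_thetaT δ s hb',
      ← sum_add_distrib]
    refine sum_congr rfl fun n _ => ?_
    rw [thetaT, thetaT, thetaT, iter_add, map_add, add_mul, smul_add]
  · intro r
    have h1 : (⇑δ)^[1] (algebraMap k B r) = 0 := by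
      simpa using δ.map_algebraMap r
    show (∑ᶠ n, thetaT δ s (algebraMap k B r) n) = algebraMap k (LaurentPolynomial B) r
    rw [finsum_thetaT δ s h1, sum_range_one, LaurentPolynomial.algebraMap_apply]
    simp [thetaT, thetaC]
end

section
/- Let A = B[x; α, δ]_p be a Poisson polynomial algebra with αδ = δ(α + s) for some s ∈ k (char k = 0). Then for all a, b ∈ B and n ≥ 0: δ^n({a,b}) = Σ_{l+m=n} C(n,l) ( {δ^l(a), δ^m(b)} + m δ^l(α(a)) δ^m(b) − l δ^l(a) δ^m(α(b)) ), where C(n,l) denotes the binomial coefficient. -/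
namespace Statement9Aux

variable {k : Type*} [Field k] [CharZero k] {B : Type*} [CommRing B] [Algebra k B]

/-- one summand of the twisted Leibniz formula -/
def tterm (brB : B → B → B) (αa αb : B) (δ : B → B) (a b : B) (l m : ℕ) : B :=
  brB (δ^[l] a) (δ^[m] b) + m • (δ^[l] αa * δ^[m] b) - l • (δ^[l] a * δ^[m] αb)

lemma dnsmul (δ : Derivation k B B) (n : ℕ) (x : B) : δ (n • x) = n • δ x :=
  map_nsmul δ.toLinearMap.toAddMonoidHom n x

lemma dmul (δ : Derivation k B B) (x y : B) : δ (x * y) = δ x * y + x * δ y := by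
  simp [Derivation.leibniz, smul_eq_mul]; ring

lemma iter_alpha (α δ : Derivation k B B) (s : k)
    (hcomm : ∀ b : B, α (δ b) = δ (α b) + s • δ b) :
    ∀ (l : ℕ) (x : B), α ((⇑δ)^[l] x) = (⇑δ)^[l] (α x) + (l • s) • (⇑δ)^[l] x := by
  intro l
  induction l with
  | zero => intro x; simp
  | succ l ih =>
    intro x
    have hit : ∀ (n : ℕ) (y : B), δ ((⇑δ)^[n] y) = (⇑δ)^[n + 1] y :=
      fun n y => (Function.iterate_succ_apply' _ n y).symm
    rw [Function.iterate_succ_apply', hcomm, ih, map_add, Derivation.map_smul]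
    simp only [hit]
    rw [succ_nsmul, add_smul]
    abel

lemma step (brB : B → B → B) (α δ : Derivation k B B) (s : k)
    (hδ : ∀ a b : B, δ (brB a b)
      = brB (δ a) b + brB a (δ b) + α a * δ b - δ a * α b)
    (hcomm : ∀ b : B, α (δ b) = δ (α b) + s • δ b)
    (a b : B) (l m : ℕ) :
    δ (tterm brB (α a) (α b) (⇑δ) a b l m)
      = tterm brB (α a) (α b) (⇑δ) a b (l + 1) m
        + tterm brB (α a) (α b) (⇑δ) a b l (m + 1)
        + l • (s • ((⇑δ)^[l] a * (⇑δ)^[m + 1] b))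
        - m • (s • ((⇑δ)^[l + 1] a * (⇑δ)^[m] b)) := by
  unfold tterm
  rw [map_sub, map_add, dnsmul, dnsmul, dmul, dmul, hδ,
    iter_alpha α δ s hcomm l a, iter_alpha α δ s hcomm m b]
  have hit : ∀ (n : ℕ) (y : B), δ ((⇑δ)^[n] y) = (⇑δ)^[n + 1] y :=
    fun n y => (Function.iterate_succ_apply' _ n y).symm
  simp only [hit]
  simp only [add_mul, mul_add, smul_mul_assoc, mul_smul_comm, smul_eq_mul]
  simp only [← Nat.cast_smul_eq_nsmul k]
  simp only [smul_eq_mul, smul_smul]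
  push_cast
  module

end Statement9Aux

namespace Statement9Aux

variable {k : Type*} [Field k] [CharZero k] {B : Type*} [CommRing B] [Algebra k B]

lemma dsum (δ : Derivation k B B) {ι : Type*} (t : Finset ι) (f : ι → B) :
    δ (∑ i ∈ t, f i) = ∑ i ∈ t, δ (f i) := map_sum δ.toLinearMap.toAddMonoidHom f t

lemma key (brB : B → B → B) (α δ : Derivation k B B) (s : k)
    (hδ : ∀ a b : B, δ (brB a b)
      = brB (δ a) b + brB a (δ b) + α a * δ b - δ a * α b)
    (hcomm : ∀ b : B, α (δ b) = δ (α b) + s • δ b)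
    (a b : B) : ∀ n : ℕ, (⇑δ)^[n] (brB a b)
      = ∑ l ∈ Finset.range (n + 1), n.choose l • tterm brB (α a) (α b) (⇑δ) a b l (n - l) := by
  intro n
  induction n with
  | zero => simp [tterm]
  | succ n ih =>
    rw [Function.iterate_succ_apply', ih, dsum]
    simp only [dnsmul, step brB α δ s hδ hcomm a b]
    simp only [smul_add, smul_sub]
    rw [Finset.sum_sub_distrib, Finset.sum_add_distrib, Finset.sum_add_distrib]
    -- the two `s`-sums cancel
    have hS34 : (∑ l ∈ Finset.range (n+1),
          n.choose l • (l • (s • ((⇑δ)^[l] a * (⇑δ)^[n-l+1] b))))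
        = ∑ l ∈ Finset.range (n+1),
          n.choose l • ((n-l) • (s • ((⇑δ)^[l+1] a * (⇑δ)^[n-l] b))) := by
      rw [Finset.sum_range_succ' _ n, Finset.sum_range_succ]
      simp only [zero_smul, smul_zero, add_zero, Nat.sub_self]
      refine Finset.sum_congr rfl ?_
      intro i hi
      have hi' : i < n := Finset.mem_range.mp hi
      have h1 : n - (i+1) + 1 = n - i := by omega
      rw [h1, smul_smul, smul_smul, Nat.choose_succ_right_eq]
    rw [hS34, add_sub_cancel_right]
    -- rewrite S2
    have h2 : (∑ l ∈ Finset.range (n+1),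
          n.choose l • tterm brB (α a) (α b) (⇑δ) a b l (n - l + 1))
        = (∑ i ∈ Finset.range (n+1),
            n.choose (i+1) • tterm brB (α a) (α b) (⇑δ) a b (i+1) (n - i))
          + tterm brB (α a) (α b) (⇑δ) a b 0 (n + 1) := by
      rw [Finset.sum_range_succ' _ n, Finset.sum_range_succ]
      simp only [Nat.choose_zero_right, one_smul, Nat.sub_zero, Nat.choose_succ_self,
        zero_smul, add_zero]
      congr 1
      refine Finset.sum_congr rfl ?_
      intro i hi
      have hi' : i < n := Finset.mem_range.mp hi
      have h1 : n - (i+1) + 1 = n - i := by omega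
      rw [h1]
    rw [h2]
    -- rewrite the RHS
    rw [Finset.sum_range_succ' _ (n+1)]
    simp only [Nat.succ_sub_succ, Nat.choose_zero_right, one_smul, Nat.sub_zero,
      Nat.choose_succ_succ, add_smul]
    rw [Finset.sum_add_distrib]
    abel

end Statement9Aux


/-- Lemma 3.6: in a Poisson polynomial algebra `B[x; α, δ]_p` with
`αδ = δ(α + s)`, the iterates of `δ` satisfy the twisted Leibniz rule on
Poisson brackets. -/
theorem statement9 (k : Type*) [Field k] [CharZero k]
    (B : Type*) [CommRing B] [Algebra k B]
    (brB : B → B → B) (hbrB : IsPoissonBracket k brB)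
    (α : Derivation k B B)
    (hα : ∀ a b : B, α (brB a b) = brB (α a) b + brB a (α b))
    (δ : Derivation k B B)
    (hδ : ∀ a b : B, δ (brB a b)
      = brB (δ a) b + brB a (δ b) + α a * δ b - δ a * α b)
    (s : k)
    (hcomm : ∀ b : B, α (δ b) = δ (α b) + s • δ b) :
    ∀ (a b : B) (n : ℕ),
      (⇑δ)^[n] (brB a b) = ∑ l ∈ Finset.range (n + 1),
        n.choose l •
          (brB ((⇑δ)^[l] a) ((⇑δ)^[n - l] b)
            + (n - l) • ((⇑δ)^[l] (α a) * (⇑δ)^[n - l] b)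
            - l • ((⇑δ)^[l] a * (⇑δ)^[n - l] (α b))) := by
  intro a b n
  rw [Statement9Aux.key brB α δ s hδ hcomm a b n]
  rfl
end

section
/- Let λ, μ ∈ M_n(k) be antisymmetric matrices over a field k of characteristic zero, and suppose there exists A ∈ GL_n(ℤ) such that μ = AλA^tr. Then the Poisson fields k_λ(x_1,…,x_n) and k_μ(x_1,…,x_n) are isomorphic as Poisson algebras over k. -/
set_option synthInstance.maxHeartbeats 80000
set_option maxHeartbeats 800000

namespace Statement12Aux

open MvPolynomial Matrix

variable {k : Type*} [Field k] {n : ℕ}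

local notation "R" => MvPolynomial (Fin n) k
local notation "F" => FractionRing (MvPolynomial (Fin n) k)
local notation "ι" => algebraMap (MvPolynomial (Fin n) k) (FractionRing (MvPolynomial (Fin n) k))

lemma iota_injective : Function.Injective (ι) := IsFractionRing.injective _ _

lemma iota_X_ne_zero (i : Fin n) : ι (X i) ≠ 0 := by
  simp [map_eq_zero_iff _ (iota_injective), MvPolynomial.X_ne_zero]

/-- The coordinate `x_i` as a unit of the fraction field. -/
noncomputable def u (i : Fin n) : (FractionRing (MvPolynomial (Fin n) k))ˣ :=
  Units.mk0 (ι (X i)) (iota_X_ne_zero i)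

@[simp] lemma u_val (i : Fin n) : ((u i : Fˣ) : F) = ι (X i) := rfl

/-- The Laurent monomial `x^a` as a unit of the fraction field. -/
noncomputable def mon (a : Fin n → ℤ) : (FractionRing (MvPolynomial (Fin n) k))ˣ :=
  ∏ i, u i ^ a i

lemma mon_add (a b : Fin n → ℤ) : mon (k := k) (a + b) = mon a * mon b := by
  simp [mon, _root_.zpow_add, Finset.prod_mul_distrib]

lemma mon_zero : mon (k := k) (n := n) 0 = 1 := by simp [mon]

/-- `mon` as an additive monoid hom into `Additive Fˣ`. -/
noncomputable def monHom : (Fin n → ℤ) →+ Additive (FractionRing (MvPolynomial (Fin n) k))ˣ where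
  toFun a := Additive.ofMul (mon a)
  map_zero' := by simp [mon_zero]
  map_add' a b := by simp [mon_add]

lemma mon_sum {s : Finset (Fin n)} (f : Fin n → Fin n → ℤ) :
    mon (k := k) (∑ i ∈ s, f i) = ∏ i ∈ s, mon (k := k) (f i) := by
  classical
  induction s using Finset.induction with
  | empty => simp [mon_zero]
  | insert _ _ h ih => rw [Finset.sum_insert h, Finset.prod_insert h, mon_add, ih]

lemma mon_zsmul (z : ℤ) (a : Fin n → ℤ) : mon (k := k) (z • a) = mon a ^ z := by
  simp [mon, Pi.smul_apply, smul_eq_mul, mul_comm z, _root_.zpow_mul, Finset.prod_zpow]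

lemma mon_single (i : Fin n) : mon (k := k) (fun j => if i = j then 1 else 0) = u i := by
  rw [mon, Finset.prod_eq_single i] <;> simp +contextual [eq_comm]

lemma mon_comb (b : Fin n → ℤ) (M : Matrix (Fin n) (Fin n) ℤ) :
    ∏ i, mon (k := k) (M i) ^ b i = mon (b ᵥ* M) := by
  have : (b ᵥ* M) = ∑ i, b i • M i := by
    funext j; simp [Matrix.vecMul, dotProduct, Finset.sum_apply]
  rw [this, mon_sum fun i => b i • M i]
  exact Finset.prod_congr rfl fun i _ => (mon_zsmul _ _).symm

/-- Monomial substitution `x_i ↦ x^{M_i}` as an algebra hom into the fraction field. -/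
noncomputable def phi (M : Matrix (Fin n) (Fin n) ℤ) :
    MvPolynomial (Fin n) k →ₐ[k] FractionRing (MvPolynomial (Fin n) k) :=
  aeval fun i => ((mon (M i) : Fˣ) : F)

@[simp] lemma phi_X (M : Matrix (Fin n) (Fin n) ℤ) (i : Fin n) :
    phi (k := k) M (X i) = ((mon (M i) : Fˣ) : F) := aeval_X _ i


lemma mon_nonneg_val (v : Fin n → ℤ) (hv : ∀ j, 0 ≤ v j) :
    ((mon (k := k) v : Fˣ) : F) = ∏ j, ((u j : Fˣ) : F) ^ (v j).toNat := by
  rw [mon, Units.coe_prod]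
  refine Finset.prod_congr rfl fun j _ => ?_
  rw [Units.val_zpow_eq_zpow_val, ← zpow_natCast, Int.toNat_of_nonneg (hv j)]

lemma phi_monomial (M : Matrix (Fin n) (Fin n) ℤ) (d : Fin n →₀ ℕ) (c : k) :
    phi (k := k) M (monomial d c)
      = algebraMap k F c * ((mon ((fun i => (d i : ℤ)) ᵥ* M) : Fˣ) : F) := by
  rw [phi, aeval_monomial, Finsupp.prod_fintype _ _ (by simp)]
  congr 1
  rw [← mon_comb, Units.coe_prod]
  refine Finset.prod_congr rfl fun i _ => ?_
  rw [Units.val_zpow_eq_zpow_val, zpow_natCast]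

lemma iota_monomial (d : Fin n →₀ ℕ) (c : k) :
    ι (monomial d c) = algebraMap k F c * ∏ j, ((u j : Fˣ) : F) ^ (d j) := by
  rw [monomial_eq, Finsupp.prod_fintype _ _ (by simp), _root_.map_mul, map_prod]
  congr 1
  exact Finset.prod_congr rfl fun j _ => by rw [map_pow]; rfl

lemma phi_injective (M : Matrix (Fin n) (Fin n) ℤ)
    (hM : Function.Injective fun d : Fin n → ℤ => d ᵥ* M) :
    Function.Injective (phi (k := k) M) := by
  classical
  rw [injective_iff_map_eq_zero]
  intro p hp
  by_contra hne
  set g : (Fin n →₀ ℕ) → (Fin n → ℤ) := fun d => (fun i => (d i : ℤ)) ᵥ* M with hg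
  have hginj : Function.Injective g := by
    intro d d' h
    have h2 := hM h
    ext i
    exact_mod_cast congrFun h2 i
  set N : Fin n → ℤ := fun j => ∑ d ∈ p.support, |g d j| with hNdef
  have hN : ∀ d ∈ p.support, ∀ j, 0 ≤ g d j + N j := by
    intro d hd j
    have h1 : |g d j| ≤ N j :=
      Finset.single_le_sum (f := fun d => |g d j|) (fun d _ => abs_nonneg _) hd
    have h2 := neg_abs_le (g d j)
    linarith
  set E : (Fin n →₀ ℕ) → (Fin n →₀ ℕ) :=
    fun d => Finsupp.equivFunOnFinite.symm (fun j => (g d j + N j).toNat) with hE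
  have hEinj : ∀ d ∈ p.support, ∀ d' ∈ p.support, E d = E d' → d = d' := by
    intro d hd d' hd' h
    have h2 : (fun j => (g d j + N j).toNat) = fun j => (g d' j + N j).toNat :=
      Finsupp.equivFunOnFinite.symm.injective h
    apply hginj
    funext j
    have h3 := congrFun h2 j
    have h4 := Int.toNat_of_nonneg (hN d hd j)
    have h5 := Int.toNat_of_nonneg (hN d' hd' j)
    have : g d j + N j = g d' j + N j := by rw [← h4, ← h5, h3]
    linarith
  set q : MvPolynomial (Fin n) k := ∑ d ∈ p.support, monomial (E d) (coeff d p) with hq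
  have hEapp : ∀ d j, (E d) j = (g d j + N j).toNat := by
    intro d j; simp [hE]
  have key : ι q = ↑(mon (k := k) N) * phi (k := k) M p := by
    conv_rhs => rw [as_sum p]
    rw [hq, map_sum, map_sum, Finset.mul_sum]
    refine Finset.sum_congr rfl fun d hd => ?_
    rw [iota_monomial, phi_monomial]
    have hgd : (fun i => ((d i : ℤ))) ᵥ* M = g d := rfl
    rw [hgd, mul_comm ((mon (k := k) N : Fˣ) : F) _, mul_assoc]
    congr 1
    have h6 : (mon (k := k) (g d) : F) * (mon (k := k) N : F) = ((mon (k := k) (g d + N) : Fˣ) : F) := by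
      rw [mon_add]; push_cast; ring
    rw [h6, mon_nonneg_val _ (fun j => by simpa [add_comm] using hN d hd j)]
    exact Finset.prod_congr rfl fun j _ => by rw [hEapp]; rfl
  have hq0 : q = 0 := by
    apply iota_injective
    rw [key, hp, mul_zero, map_zero]
  obtain ⟨d0, hd0⟩ : p.support.Nonempty :=
    Finset.nonempty_iff_ne_empty.2 (fun h => hne (support_eq_empty.1 h))
  have hc : coeff (E d0) q = coeff d0 p := by
    rw [hq, coeff_sum]
    rw [Finset.sum_eq_single d0]
    · rw [coeff_monomial, if_pos rfl]
    · intro d hd hdne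
      rw [coeff_monomial, if_neg (fun h => hdne (hEinj d hd d0 hd0 h))]
    · intro h; exact absurd hd0 h
  rw [hq0] at hc
  simp only [coeff_zero] at hc
  exact (MvPolynomial.mem_support_iff.mp hd0) hc.symm


/-- Lift of `phi M` to the fraction field. -/
noncomputable def eH (M : Matrix (Fin n) (Fin n) ℤ)
    (hM : Function.Injective fun d : Fin n → ℤ => d ᵥ* M) :
    FractionRing (MvPolynomial (Fin n) k) →ₐ[k] FractionRing (MvPolynomial (Fin n) k) :=
  IsFractionRing.liftAlgHom (g := phi (k := k) M) (phi_injective M hM)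

lemma eH_iota (M : Matrix (Fin n) (Fin n) ℤ) (hM) (p : MvPolynomial (Fin n) k) :
    eH (k := k) M hM (ι p) = phi (k := k) M p := by
  rw [eH, IsFractionRing.liftAlgHom_apply, IsFractionRing.lift_algebraMap]
  rfl

lemma eH_u (M : Matrix (Fin n) (Fin n) ℤ) (hM) (i : Fin n) :
    eH (k := k) M hM ((u i : Fˣ) : F) = ((mon (M i) : Fˣ) : F) := by
  rw [u_val, eH_iota, phi_X]

lemma eH_mon (M : Matrix (Fin n) (Fin n) ℤ) (hM) (b : Fin n → ℤ) :
    eH (k := k) M hM ((mon b : Fˣ) : F) = ((mon (b ᵥ* M) : Fˣ) : F) := by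
  rw [mon, Units.coe_prod, map_prod, ← mon_comb, Units.coe_prod]
  refine Finset.prod_congr rfl fun i _ => ?_
  rw [Units.val_zpow_eq_zpow_val, map_zpow₀, eH_u, Units.val_zpow_eq_zpow_val]

lemma row_mul (M N : Matrix (Fin n) (Fin n) ℤ) (i : Fin n) :
    (M * N) i = (M i) ᵥ* N :=
  funext fun j => by simp [Matrix.mul_apply, Matrix.vecMul, dotProduct]

lemma eH_phi (M1 : Matrix (Fin n) (Fin n) ℤ) (hM1) (M2 : Matrix (Fin n) (Fin n) ℤ)
    (h : M2 * M1 = 1) (p : MvPolynomial (Fin n) k) :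
    eH (k := k) M1 hM1 (phi (k := k) M2 p) = ι p := by
  have hcomp : ((eH (k := k) M1 hM1).comp (phi (k := k) M2)) = IsScalarTower.toAlgHom k (MvPolynomial (Fin n) k) F := by
    apply MvPolynomial.algHom_ext
    intro i
    rw [AlgHom.comp_apply, phi_X, eH_mon, ← row_mul, h]
    show ((mon ((1 : Matrix (Fin n) (Fin n) ℤ) i) : Fˣ) : F) = _
    have : (1 : Matrix (Fin n) (Fin n) ℤ) i = fun j => if i = j then 1 else 0 := by
      funext j; simp [Matrix.one_apply]
    rw [this, mon_single]
    rfl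
  exact DFunLike.congr_fun hcomp p

lemma eH_comp_apply (M1 : Matrix (Fin n) (Fin n) ℤ) (hM1) (M2 : Matrix (Fin n) (Fin n) ℤ) (hM2)
    (h : M2 * M1 = 1) (x : FractionRing (MvPolynomial (Fin n) k)) :
    eH (k := k) M1 hM1 (eH (k := k) M2 hM2 x) = x := by
  obtain ⟨p, q, hq, rfl⟩ := IsFractionRing.div_surjective (A := MvPolynomial (Fin n) k) x
  rw [map_div₀, map_div₀, eH_iota, eH_iota, eH_phi M1 hM1 M2 h, eH_phi M1 hM1 M2 h]

/-- The monomial field automorphism attached to a pair of mutually inverse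
integer matrices. -/
noncomputable def eAut (M1 M2 : Matrix (Fin n) (Fin n) ℤ)
    (hM1 : Function.Injective fun d : Fin n → ℤ => d ᵥ* M1)
    (hM2 : Function.Injective fun d : Fin n → ℤ => d ᵥ* M2)
    (h12 : M1 * M2 = 1) (h21 : M2 * M1 = 1) :
    FractionRing (MvPolynomial (Fin n) k) ≃ₐ[k] FractionRing (MvPolynomial (Fin n) k) :=
  AlgEquiv.ofAlgHom (eH (k := k) M1 hM1) (eH (k := k) M2 hM2)
    (AlgHom.ext fun x => eH_comp_apply M1 hM1 M2 hM2 h21 x)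
    (AlgHom.ext fun x => eH_comp_apply M2 hM2 M1 hM1 h12 x)

lemma eAut_apply (M1 M2 : Matrix (Fin n) (Fin n) ℤ)
    (hM1 : Function.Injective fun d : Fin n → ℤ => d ᵥ* M1)
    (hM2 : Function.Injective fun d : Fin n → ℤ => d ᵥ* M2)
    (h12 : M1 * M2 = 1) (h21 : M2 * M1 = 1) (x : F) :
    eAut (k := k) M1 M2 hM1 hM2 h12 h21 x = eH (k := k) M1 hM1 x := rfl




section Bracket

lemma br_add_right {br : F → F → F} (hbr : IsPoissonBracket k br) (a b c : F) :
    br a (b + c) = br a b + br a c := hbr.2.1 a b c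

lemma br_smul_left {br : F → F → F} (hbr : IsPoissonBracket k br) (r : k) (a b : F) :
    br (r • a) b = r • br a b := hbr.2.2.1 r a b

lemma br_antisym {br : F → F → F} (hbr : IsPoissonBracket k br) (a b : F) :
    br a b = - br b a := hbr.2.2.2.1 a b

lemma br_leibniz_right {br : F → F → F} (hbr : IsPoissonBracket k br) (a b c : F) :
    br a (b * c) = br a b * c + b * br a c := hbr.2.2.2.2.2 a b c

lemma br_smul_right {br : F → F → F} (hbr : IsPoissonBracket k br) (r : k) (a b : F) :
    br a (r • b) = r • br a b := by
  rw [br_antisym hbr, br_smul_left hbr, br_antisym hbr b a, smul_neg, neg_neg]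

lemma br_leibniz_left {br : F → F → F} (hbr : IsPoissonBracket k br) (a b c : F) :
    br (b * c) a = br b a * c + b * br c a := by
  rw [br_antisym hbr, br_leibniz_right hbr, br_antisym hbr b a, br_antisym hbr c a]
  ring

lemma br_one_right {br : F → F → F} (hbr : IsPoissonBracket k br) (a : F) : br a 1 = 0 := by
  have h : br a 1 = br a 1 + br a 1 := by
    conv_lhs => rw [show (1 : F) = 1 * 1 by ring]
    rw [br_leibniz_right hbr]; ring
  exact (left_eq_add.mp h)

lemma br_one_left {br : F → F → F} (hbr : IsPoissonBracket k br) (a : F) : br 1 a = 0 := by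
  rw [br_antisym hbr, br_one_right hbr, neg_zero]

/-- `br x y = c · x y` for units `x, y` and a scalar `c`. -/
def IsLog (br : F → F → F) (x y : (FractionRing (MvPolynomial (Fin n) k))ˣ) (c : k) : Prop :=
  br ↑x ↑y = algebraMap k F c * ((x : F) * y)

lemma IsLog.flip {br : F → F → F} (hbr : IsPoissonBracket k br) {x y : Fˣ} {c : k}
    (h : IsLog br x y c) : IsLog br y x (-c) := by
  rw [IsLog, br_antisym hbr, h, map_neg]
  ring

lemma IsLog.of_eq {br : F → F → F} {x y : Fˣ} {c c' : k} (h : IsLog br x y c) (hc : c = c') :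
    IsLog br x y c' := hc ▸ h

lemma isLog_one_left {br : F → F → F} (hbr : IsPoissonBracket k br) (y : Fˣ) :
    IsLog br 1 y 0 := by
  rw [IsLog, Units.val_one, br_one_left hbr, map_zero]
  ring

lemma IsLog.mul_left {br : F → F → F} (hbr : IsPoissonBracket k br) {x x' y : Fˣ} {c c' : k}
    (h : IsLog br x y c) (h' : IsLog br x' y c') : IsLog br (x * x') y (c + c') := by
  rw [IsLog, Units.val_mul, br_leibniz_left hbr, h, h', map_add]
  ring

lemma IsLog.inv_left {br : F → F → F} (hbr : IsPoissonBracket k br) {x y : Fˣ} {c : k}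
    (h : IsLog br x y c) : IsLog br x⁻¹ y (-c) := by
  have h0 : br (↑(x * x⁻¹) : F) ↑y = 0 := by rw [mul_inv_cancel]; exact br_one_left hbr _
  rw [Units.val_mul, br_leibniz_left hbr, h] at h0
  have hx : (x : F) ≠ 0 := Units.ne_zero x
  rw [IsLog]
  apply mul_left_cancel₀ hx
  have h1 : (x : F) * br (↑(x⁻¹) : F) ↑y
      = - (algebraMap k F c * ((x : F) * ↑y) * ↑(x⁻¹)) := by linear_combination h0
  rw [h1, map_neg, Units.val_inv_eq_inv_val]
  field_simp

lemma IsLog.zpow_left {br : F → F → F} (hbr : IsPoissonBracket k br) {x y : Fˣ} {c : k}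
    (h : IsLog br x y c) (m : ℤ) : IsLog br (x ^ m) y ((m : k) * c) := by
  induction m using Int.induction_on with
  | zero =>
      rw [zpow_zero]
      exact (isLog_one_left hbr y).of_eq (by push_cast; ring)
  | succ i ih =>
      have h2 := (ih.mul_left hbr h)
      rw [← _root_.zpow_add_one] at h2
      exact h2.of_eq (by push_cast; ring)
  | pred i ih =>
      have h2 := (ih.mul_left hbr (h.inv_left hbr))
      rw [← _root_.zpow_sub_one] at h2
      exact h2.of_eq (by push_cast; ring)

lemma isLog_prod_left {br : F → F → F} (hbr : IsPoissonBracket k br) {y : Fˣ}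
    (x : Fin n → Fˣ) (c : Fin n → k) (s : Finset (Fin n))
    (h : ∀ i ∈ s, IsLog br (x i) y (c i)) :
    IsLog br (∏ i ∈ s, x i) y (∑ i ∈ s, c i) := by
  classical
  induction s using Finset.induction with
  | empty => simpa using isLog_one_left hbr y
  | insert _ _ hns ih =>
      rw [Finset.prod_insert hns, Finset.sum_insert hns]
      exact (h _ (Finset.mem_insert_self _ _)).mul_left hbr
        (ih fun i hi => h i (Finset.mem_insert_of_mem hi))

lemma isLog_mon {br : F → F → F} (hbr : IsPoissonBracket k br)
    (m : Matrix (Fin n) (Fin n) k)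
    (hq : ∀ i j, IsLog br (u i) (u j) (m i j)) (a b : Fin n → ℤ) :
    IsLog br (mon a) (mon b) (∑ i, ∑ j, (a i : k) * (b j : k) * m i j) := by
  have step1 : ∀ j : Fin n, IsLog br (mon a) (u j) (∑ i, (a i : k) * m i j) := by
    intro j
    rw [mon]
    exact isLog_prod_left hbr _ _ _ fun i _ => (hq i j).zpow_left hbr (a i)
  have step2 : ∀ j : Fin n, IsLog br (u j) (mon a) (- ∑ i, (a i : k) * m i j) :=
    fun j => (step1 j).flip hbr
  have step3 : ∀ j : Fin n, IsLog br (u j ^ b j) (mon a)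
      ((b j : k) * (- ∑ i, (a i : k) * m i j)) :=
    fun j => (step2 j).zpow_left hbr (b j)
  have step4 : IsLog br (mon b) (mon a)
      (∑ j, (b j : k) * (- ∑ i, (a i : k) * m i j)) := by
    rw [mon]
    exact isLog_prod_left hbr _ _ _ fun j _ => step3 j
  refine (step4.flip hbr).of_eq ?_
  have e1 : ∀ j, (b j : k) * - ∑ i, (a i : k) * m i j
      = - ∑ i, (a i : k) * (b j : k) * m i j := by
    intro j
    rw [mul_neg, Finset.mul_sum]
    congr 1
    exact Finset.sum_congr rfl fun i _ => by ring
  rw [Finset.sum_congr rfl fun j _ => e1 j]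
  rw [show ∑ i, ∑ j, (a i : k) * (b j : k) * m i j
      = ∑ j, ∑ i, (a i : k) * (b j : k) * m i j from Finset.sum_comm]
  simp

lemma deriv_eq_zero (D : F → F)
    (hadd : ∀ a b : F, D (a + b) = D a + D b)
    (hsmul : ∀ (c : k) (a : F), D (c • a) = c • D a)
    (hmul : ∀ a b : F, D (a * b) = D a * b + a * D b)
    (hX : ∀ i : Fin n, D (ι (X i)) = 0) (x : F) : D x = 0 := by
  have h1 : D 1 = 0 := by
    have h := hmul 1 1
    simp only [mul_one, one_mul] at h
    exact (left_eq_add.mp h)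
  have hpoly : ∀ p : MvPolynomial (Fin n) k, D (ι p) = 0 := by
    intro p
    induction p using MvPolynomial.induction_on with
    | C c =>
        have h2 : ι (C c) = c • (1 : F) := by
          rw [Algebra.smul_def, mul_one, ← MvPolynomial.algebraMap_eq,
            ← IsScalarTower.algebraMap_apply]
        rw [h2, hsmul, h1, smul_zero]
    | add p q hp hq => rw [map_add, hadd, hp, hq, add_zero]
    | mul_X p i hp => rw [_root_.map_mul, hmul, hp, hX, mul_zero, zero_mul, add_zero]
  obtain ⟨p, q, hq, rfl⟩ := IsFractionRing.div_surjective (A := MvPolynomial (Fin n) k) x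
  have hq0 : ι q ≠ 0 := by
    have hqq : q ≠ 0 := mem_nonZeroDivisors_iff_ne_zero.mp hq
    simpa [map_eq_zero_iff _ iota_injective] using hqq
  have h3 : ι q * (ι p / ι q) = ι p := by field_simp
  have h4 := hmul (ι q) (ι p / ι q)
  rw [h3, hpoly p, hpoly q, zero_mul, zero_add] at h4
  exact ((mul_eq_zero.mp h4.symm).resolve_left hq0)

lemma bracket_unique {br br' : F → F → F} (hbr : IsPoissonBracket k br)
    (hbr' : IsPoissonBracket k br')
    (hXX : ∀ i j : Fin n, br (ι (X i)) (ι (X j)) = br' (ι (X i)) (ι (X j)))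
    (a b : F) : br a b = br' a b := by
  have step1 : ∀ (i : Fin n) (b : F), br (ι (X i)) b = br' (ι (X i)) b := by
    intro i b
    have h := deriv_eq_zero (fun b => br (ι (X i)) b - br' (ι (X i)) b)
      (fun x y => by rw [br_add_right hbr, br_add_right hbr']; ring)
      (fun c x => by rw [br_smul_right hbr, br_smul_right hbr', smul_sub])
      (fun x y => by rw [br_leibniz_right hbr, br_leibniz_right hbr']; ring)
      (fun j => by rw [hXX i j, sub_self]) b
    exact sub_eq_zero.mp h
  have h := deriv_eq_zero (fun a => br a b - br' a b)
    (fun x y => by rw [hbr.1, hbr'.1]; ring)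
    (fun c x => by rw [br_smul_left hbr, br_smul_left hbr', smul_sub])
    (fun x y => by rw [br_leibniz_left hbr, br_leibniz_left hbr']; ring)
    (fun i => by rw [step1 i b, sub_self]) a
  exact sub_eq_zero.mp h

lemma isPoissonBracket_conj {br : F → F → F} (hbr : IsPoissonBracket k br)
    (e : F ≃ₐ[k] F) :
    IsPoissonBracket k (fun a b => e.symm (br (e a) (e b))) := by
  obtain ⟨h1, h2, h3, h4, h5, h6⟩ := hbr
  refine ⟨fun a b c => ?_, fun a b c => ?_, fun r a b => ?_, fun a b => ?_,
    fun a b c => ?_, fun a b c => ?_⟩ <;> dsimp only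
  · rw [map_add, h1, map_add]
  · rw [map_add, h2, map_add]
  · rw [_root_.map_smul, h3, _root_.map_smul]
  · rw [h4, map_neg]
  · simp only [AlgEquiv.apply_symm_apply]
    rw [h5, map_add]
  · rw [_root_.map_mul, h6, map_add, _root_.map_mul, _root_.map_mul,
      AlgEquiv.symm_apply_apply, AlgEquiv.symm_apply_apply]

end Bracket

end Statement12Aux

open Matrix MvPolynomial in
/-- Lemma 5.1: if `μ = A λ A^tr` for some `A ∈ GL_n(ℤ)`, then
`k_λ(x_1,…,x_n) ≅ k_μ(x_1,…,x_n)` as Poisson algebras over `k`. -/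
theorem statement12 (k : Type*) [Field k] [CharZero k] (n : ℕ)
    (lam mu : Matrix (Fin n) (Fin n) k) (hlam : lamᵀ = -lam) (hmu : muᵀ = -mu)
    (A : Matrix (Fin n) (Fin n) ℤ) (hA : IsUnit A.det)
    (hAmu : mu = A.map (Int.cast : ℤ → k) * lam * (A.map (Int.cast : ℤ → k))ᵀ)
    -- the quadratic Poisson field `k_λ(x_1,…,x_n)`
    (br₁ : FractionRing (MvPolynomial (Fin n) k) → FractionRing (MvPolynomial (Fin n) k) →
      FractionRing (MvPolynomial (Fin n) k))
    (hbr₁ : IsPoissonBracket k br₁)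
    (hquad₁ : ∀ i j : Fin n,
      br₁ (algebraMap (MvPolynomial (Fin n) k) (FractionRing (MvPolynomial (Fin n) k)) (X i))
          (algebraMap (MvPolynomial (Fin n) k) (FractionRing (MvPolynomial (Fin n) k)) (X j))
        = algebraMap (MvPolynomial (Fin n) k) (FractionRing (MvPolynomial (Fin n) k))
            (lam i j • (X i * X j)))
    -- the quadratic Poisson field `k_μ(x_1,…,x_n)`
    (br₂ : FractionRing (MvPolynomial (Fin n) k) → FractionRing (MvPolynomial (Fin n) k) →
      FractionRing (MvPolynomial (Fin n) k))
    (hbr₂ : IsPoissonBracket k br₂)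
    (hquad₂ : ∀ i j : Fin n,
      br₂ (algebraMap (MvPolynomial (Fin n) k) (FractionRing (MvPolynomial (Fin n) k)) (X i))
          (algebraMap (MvPolynomial (Fin n) k) (FractionRing (MvPolynomial (Fin n) k)) (X j))
        = algebraMap (MvPolynomial (Fin n) k) (FractionRing (MvPolynomial (Fin n) k))
            (mu i j • (X i * X j))) :
    ∃ e : FractionRing (MvPolynomial (Fin n) k) ≃ₐ[k] FractionRing (MvPolynomial (Fin n) k),
      ∀ a b, e (br₁ a b) = br₂ (e a) (e b) := by
  classical
  open Statement12Aux in
  set B := A⁻¹ with hBdef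
  have hBA : B * A = 1 := Matrix.nonsing_inv_mul A hA
  have hAB : A * B = 1 := Matrix.mul_nonsing_inv A hA
  have hAinj : Function.Injective fun d : Fin n → ℤ => d ᵥ* A := by
    intro d d' h
    have h2 := congrArg (fun v => v ᵥ* B) h
    simpa [Matrix.vecMul_vecMul, hAB, Matrix.vecMul_one] using h2
  have hBinj : Function.Injective fun d : Fin n → ℤ => d ᵥ* B := by
    intro d d' h
    have h2 := congrArg (fun v => v ᵥ* A) h
    simpa [Matrix.vecMul_vecMul, hBA, Matrix.vecMul_one] using h2
  set e : FractionRing (MvPolynomial (Fin n) k) ≃ₐ[k] FractionRing (MvPolynomial (Fin n) k) :=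
    Statement12Aux.eAut B A hBinj hAinj hBA hAB with he
  refine ⟨e, ?_⟩
  -- the images of the generators
  have hei : ∀ i : Fin n,
      e (algebraMap (MvPolynomial (Fin n) k) (FractionRing (MvPolynomial (Fin n) k)) (X i))
        = ((mon (B i) : (FractionRing (MvPolynomial (Fin n) k))ˣ) :
            FractionRing (MvPolynomial (Fin n) k)) := fun i => by
    rw [he, eAut_apply, ← u_val, eH_u]
  -- scalars move out of `ι`
  have hsm : ∀ (c : k) (p : MvPolynomial (Fin n) k),
      algebraMap (MvPolynomial (Fin n) k) (FractionRing (MvPolynomial (Fin n) k)) (c • p)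
        = algebraMap k (FractionRing (MvPolynomial (Fin n) k)) c *
            algebraMap (MvPolynomial (Fin n) k) (FractionRing (MvPolynomial (Fin n) k)) p := by
    intro c p
    rw [MvPolynomial.smul_eq_C_mul, _root_.map_mul, ← MvPolynomial.algebraMap_eq,
      ← IsScalarTower.algebraMap_apply]
  -- translate the quadratic hypothesis into `IsLog`
  have hq2 : ∀ i j : Fin n, IsLog br₂ (u i) (u j) (mu i j) := by
    intro i j
    rw [IsLog, u_val, u_val, hquad₂ i j, hsm, _root_.map_mul]
  -- the matrix identity `B μ Bᵀ = λ` over `k`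
  have hBk : (B.map (Int.cast : ℤ → k)) * (A.map (Int.cast : ℤ → k)) = 1 := by
    ext i j
    rw [Matrix.mul_apply]
    simp only [Matrix.map_apply]
    rw [show ∑ s, ((B i s : ℤ) : k) * ((A s j : ℤ) : k)
        = (((∑ s, B i s * A s j : ℤ)) : k) by push_cast; ring]
    rw [← Matrix.mul_apply, hBA]
    simp [Matrix.one_apply, apply_ite]
  have hlam2 : (B.map (Int.cast : ℤ → k)) * mu * (B.map (Int.cast : ℤ → k))ᵀ = lam := by
    rw [hAmu]
    calc (B.map (Int.cast : ℤ → k)) * (A.map (Int.cast : ℤ → k) * lam *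
            (A.map (Int.cast : ℤ → k))ᵀ) * (B.map (Int.cast : ℤ → k))ᵀ
        = ((B.map (Int.cast : ℤ → k)) * (A.map (Int.cast : ℤ → k))) * lam *
            (((B.map (Int.cast : ℤ → k)) * (A.map (Int.cast : ℤ → k)))ᵀ) := by
          rw [Matrix.transpose_mul]
          noncomm_ring
      _ = lam := by rw [hBk]; simp
  have hconst : ∀ i j : Fin n,
      (∑ s, ∑ t, ((B i s : ℤ) : k) * ((B j t : ℤ) : k) * mu s t) = lam i j := by
    intro i j
    rw [← hlam2, Matrix.mul_apply, Finset.sum_comm]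
    refine Finset.sum_congr rfl fun t _ => ?_
    rw [Matrix.mul_apply, Finset.sum_mul]
    refine Finset.sum_congr rfl fun s _ => ?_
    simp only [Matrix.map_apply, Matrix.transpose_apply]
    ring
  -- `br₂` on the images of the generators
  have hbrmon : ∀ i j : Fin n,
      br₂ ((mon (B i) : (FractionRing (MvPolynomial (Fin n) k))ˣ) :
            FractionRing (MvPolynomial (Fin n) k))
          ((mon (B j) : (FractionRing (MvPolynomial (Fin n) k))ˣ) :
            FractionRing (MvPolynomial (Fin n) k))
        = algebraMap k (FractionRing (MvPolynomial (Fin n) k)) (lam i j) *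
            (((mon (B i) : (FractionRing (MvPolynomial (Fin n) k))ˣ) :
                FractionRing (MvPolynomial (Fin n) k)) *
              ((mon (B j) : (FractionRing (MvPolynomial (Fin n) k))ˣ) :
                FractionRing (MvPolynomial (Fin n) k))) := by
    intro i j
    have h := isLog_mon hbr₂ mu hq2 (B i) (B j)
    rw [IsLog] at h
    rw [h, hconst i j]
  -- the conjugated bracket agrees with `br₁` on generators
  have hXX : ∀ i j : Fin n,
      br₁ (algebraMap (MvPolynomial (Fin n) k) (FractionRing (MvPolynomial (Fin n) k)) (X i))
          (algebraMap (MvPolynomial (Fin n) k) (FractionRing (MvPolynomial (Fin n) k)) (X j))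
        = e.symm (br₂
            (e (algebraMap (MvPolynomial (Fin n) k)
              (FractionRing (MvPolynomial (Fin n) k)) (X i)))
            (e (algebraMap (MvPolynomial (Fin n) k)
              (FractionRing (MvPolynomial (Fin n) k)) (X j)))) := by
    intro i j
    rw [hei i, hei j, hbrmon i j, _root_.map_mul, _root_.map_mul, ← hei i, ← hei j,
      AlgEquiv.symm_apply_apply, AlgEquiv.symm_apply_apply, hquad₁ i j, hsm, _root_.map_mul]
    congr 1
    exact (e.symm.commutes (lam i j)).symm
  have huniq := bracket_unique hbr₁ (isPoissonBracket_conj hbr₂ e) hXX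
  intro a b
  rw [huniq a b, AlgEquiv.apply_symm_apply]
end

section
/- Let K = k_λ(x_1,…,x_n) for an antisymmetric matrix λ ∈ M_n(k), char k = 0. Then the k-subspace of K spanned by all Poisson brackets {f,g} with f,g ∈ K intersects k trivially: no nonzero scalar is a k-linear combination of Poisson brackets. In particular, there are no elements x, y ∈ K with {x,y} = 1. -/
open HahnSeries MvPolynomial
set_option maxHeartbeats 1000000
set_option synthInstance.maxHeartbeats 400000

noncomputable section PoissonAux
variable {k : Type*} [Field k] {n : ℕ}

instance instGammaLOACG (n : ℕ) : IsOrderedAddMonoid (Lex (Fin n → ℤ)) :=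
  letI : WellFoundedLT (Fin n) := inferInstance
  inferInstance

abbrev LL (k : Type*) [Field k] (n : ℕ) := HahnSeries (Lex (Fin n → ℤ)) k

theorem coeff_sum {α : Type*} (s : Finset α) (F : α → LL k n) (a : Lex (Fin n → ℤ)) :
    (∑ i ∈ s, F i).coeff a = ∑ i ∈ s, (F i).coeff a :=
  map_sum (HahnSeries.coeff.addMonoidHom a) F s

theorem mul_coeff₂ {x y : LL k n} {s t : Set (Lex (Fin n → ℤ))} (hs : s.IsPWO) (ht : t.IsPWO)
    (hxs : x.support ⊆ s) (hyt : y.support ⊆ t) {a : Lex (Fin n → ℤ)} :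
    (x * y).coeff a = ∑ ij ∈ Finset.antidiagonal hs ht a, x.coeff ij.1 * y.coeff ij.2 := by
  rw [HahnSeries.coeff_mul_left' hs hxs]
  apply Finset.sum_subset
  · intro p hp
    rw [Finset.mem_addAntidiagonal] at hp ⊢
    exact ⟨hp.1, hyt hp.2.1, hp.2.2⟩
  · intro p hp hp'
    rw [Finset.mem_addAntidiagonal] at hp hp'
    have : p.2 ∉ y.support := fun h => hp' ⟨hp.1, h, hp.2.2⟩
    rw [HahnSeries.mem_support, not_not] at this
    rw [this, mul_zero]

/-- The derivation `x_i ∂/∂x_i` on Hahn series. -/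
def EE (i : Fin n) (z : LL k n) : LL k n where
  coeff := fun d => (ofLex d i) • z.coeff d
  isPWO_support' := z.isPWO_support'.mono (by
    intro d hd
    simp only [Function.mem_support, ne_eq] at hd ⊢
    intro h
    apply hd
    rw [h, smul_zero])

@[simp] theorem EE_coeff (i : Fin n) (z : LL k n) (d : Lex (Fin n → ℤ)) :
    (EE i z).coeff d = (ofLex d i) • z.coeff d := rfl

theorem EE_support (i : Fin n) (z : LL k n) : (EE i z).support ⊆ z.support := by
  intro d hd
  simp only [HahnSeries.mem_support, EE_coeff, ne_eq] at hd ⊢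
  intro h; exact hd (by rw [h, smul_zero])

theorem EE_add (i : Fin n) (z w : LL k n) : EE i (z + w) = EE i z + EE i w := by
  ext d; simp [smul_add]

theorem EE_single (i : Fin n) (a : Lex (Fin n → ℤ)) (c : k) :
    EE i (HahnSeries.single a c) = HahnSeries.single a ((ofLex a i) • c) := by
  ext d
  rw [EE_coeff]
  rcases eq_or_ne d a with rfl | h
  · simp
  · simp [HahnSeries.coeff_single_of_ne h]

theorem EE_smul (i : Fin n) (c : k) (z : LL k n) : EE i (c • z) = c • EE i z := by
  ext d
  simp only [EE_coeff, HahnSeries.coeff_smul, zsmul_eq_mul, smul_eq_mul]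
  ring

theorem EE_mul (i : Fin n) (z w : LL k n) : EE i (z * w) = EE i z * w + z * EE i w := by
  ext d
  rw [HahnSeries.coeff_add, EE_coeff, HahnSeries.coeff_mul,
    mul_coeff₂ z.isPWO_support w.isPWO_support (EE_support i z) subset_rfl,
    mul_coeff₂ z.isPWO_support w.isPWO_support subset_rfl (EE_support i w),
    Finset.smul_sum, ← Finset.sum_add_distrib]
  apply Finset.sum_congr rfl
  intro p hp
  rw [Finset.mem_addAntidiagonal] at hp
  have : ofLex d i = ofLex p.1 i + ofLex p.2 i := by rw [← hp.2.2]; rfl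
  rw [EE_coeff, EE_coeff, this, add_smul, smul_mul_assoc, mul_smul_comm]



theorem smul_support (c : k) (x : LL k n) : (c • x).support ⊆ x.support := by
  intro d hd
  simp only [HahnSeries.mem_support, HahnSeries.coeff_smul] at hd ⊢
  intro h; exact hd (by rw [h, smul_zero])

theorem smul_mul_LL (c : k) (x y : LL k n) : (c • x) * y = c • (x * y) := by
  ext d
  rw [HahnSeries.coeff_smul,
    mul_coeff₂ x.isPWO_support y.isPWO_support (smul_support c x) subset_rfl,
    HahnSeries.coeff_mul, Finset.smul_sum]
  apply Finset.sum_congr rfl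
  intro p _
  rw [HahnSeries.coeff_smul, smul_eq_mul, smul_eq_mul]
  ring

theorem mul_smul_LL (c : k) (x y : LL k n) : x * (c • y) = c • (x * y) := by
  ext d
  rw [HahnSeries.coeff_smul,
    mul_coeff₂ x.isPWO_support y.isPWO_support subset_rfl (smul_support c y),
    HahnSeries.coeff_mul, Finset.smul_sum]
  apply Finset.sum_congr rfl
  intro p _
  rw [HahnSeries.coeff_smul, smul_eq_mul, smul_eq_mul]
  ring

/-- exponent embedding -/
def toG (n : ℕ) : (Fin n →₀ ℕ) →+ Lex (Fin n → ℤ) where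
  toFun d := toLex (fun i => (d i : ℤ))
  map_zero' := by
    show toLex _ = toLex (0 : Fin n → ℤ)
    congr 1
  map_add' a b := by
    show toLex _ = toLex (_ + _ : Fin n → ℤ)
    congr 1

theorem toG_apply (d : Fin n →₀ ℕ) (i : Fin n) : ofLex (toG n d) i = (d i : ℤ) := rfl

theorem toG_injective (n : ℕ) : Function.Injective (toG n) := by
  intro a b h
  ext i
  have : ofLex (toG n a) i = ofLex (toG n b) i := by rw [h]
  rw [toG_apply, toG_apply, Nat.cast_inj] at this
  exact this

theorem prod_single {α : Type*} (s : Finset α) (g : α → Lex (Fin n → ℤ)) :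
    (∏ i ∈ s, HahnSeries.single (g i) (1 : k)) = HahnSeries.single (∑ i ∈ s, g i) 1 := by
  classical
  induction s using Finset.induction with
  | empty => simp
  | insert _ _ h ih =>
      rw [Finset.prod_insert h, Finset.sum_insert h, ih, HahnSeries.single_mul_single, one_mul]

/-- the variables as Hahn series -/
def xL (i : Fin n) : LL k n := HahnSeries.single (toG n (Finsupp.single i 1)) 1

/-- the embedding of polynomials -/
def phi : MvPolynomial (Fin n) k →ₐ[k] LL k n := MvPolynomial.aeval xL

theorem phi_monomial (d : Fin n →₀ ℕ) (c : k) :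
    phi (monomial d c) = HahnSeries.single (toG n d) c := by
  rw [phi, aeval_monomial, Finsupp.prod]
  have h1 : ∀ i ∈ d.support, (xL i : LL k n) ^ d i
      = HahnSeries.single (toG n (Finsupp.single i (d i))) 1 := by
    intro i _
    rw [xL, HahnSeries.single_pow, one_pow, ← map_nsmul, Finsupp.smul_single, smul_eq_mul,
      mul_one]
  rw [Finset.prod_congr rfl h1, prod_single, ← map_sum]
  have hd : (∑ i ∈ d.support, Finsupp.single i (d i)) = d := by
    ext j
    rw [Finsupp.finset_sum_apply]
    simp only [Finsupp.single_apply]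
    by_cases hj : j ∈ d.support
    · rw [Finset.sum_eq_single j (fun b _ hb => if_neg hb) (fun h => absurd hj h), if_pos rfl]
    · rw [Finset.sum_eq_zero]
      · simpa using (Finsupp.notMem_support_iff.mp hj).symm
      · intro b hb
        by_cases hbj : b = j
        · subst hbj; simpa using Finsupp.notMem_support_iff.mp hj
        · rw [if_neg hbj]
  rw [hd, HahnSeries.algebraMap_apply]
  simp only [Algebra.algebraMap_self, RingHom.id_apply]
  rw [HahnSeries.C_apply, HahnSeries.single_mul_single, zero_add, mul_one]

theorem phi_coeff (p : MvPolynomial (Fin n) k) (d : Fin n →₀ ℕ) :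
    (phi p).coeff (toG n d) = MvPolynomial.coeff d p := by
  conv_lhs => rw [← MvPolynomial.support_sum_monomial_coeff p]
  rw [map_sum, _root_.coeff_sum]
  have h1 : ∀ e ∈ p.support, (phi (monomial e (MvPolynomial.coeff e p))).coeff (toG n d)
      = if e = d then MvPolynomial.coeff d p else 0 := by
    intro e _
    rw [phi_monomial, HahnSeries.coeff_single]
    by_cases he : e = d
    · subst he; simp
    · rw [if_neg he, if_neg (fun h => he (toG_injective n h.symm))]
  rw [Finset.sum_congr rfl h1]
  by_cases hd : d ∈ p.support
  · rw [Finset.sum_eq_single d (fun b _ hb => if_neg hb) (fun h => absurd hd h), if_pos rfl]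
  · rw [Finset.sum_eq_zero]
    · exact (MvPolynomial.notMem_support_iff.mp hd).symm
    · intro b hb
      rw [if_neg]
      intro hbd
      exact hd (hbd ▸ hb)

theorem phi_injective : Function.Injective (phi : MvPolynomial (Fin n) k →ₐ[k] LL k n) := by
  intro p q h
  ext d
  have := congrArg (fun z => HahnSeries.coeff z (toG n d)) h
  simpa [phi_coeff] using this

abbrev KK (k : Type*) [Field k] (n : ℕ) := FractionRing (MvPolynomial (Fin n) k)

def psi : KK k n →+* LL k n :=
  IsFractionRing.lift (g := (phi : MvPolynomial (Fin n) k →ₐ[k] LL k n).toRingHom)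
    phi_injective

theorem psi_iota (p : MvPolynomial (Fin n) k) :
    psi (algebraMap (MvPolynomial (Fin n) k) (KK k n) p) = phi p :=
  IsFractionRing.lift_algebraMap _ _

theorem psi_algebraMap (c : k) :
    psi (algebraMap k (KK k n) c) = HahnSeries.single 0 c := by
  rw [IsScalarTower.algebraMap_apply k (MvPolynomial (Fin n) k) (KK k n), psi_iota]
  have h1 := (phi (k := k) (n := n)).commutes c
  rw [h1, HahnSeries.algebraMap_apply]
  simp [HahnSeries.C_apply]

theorem psi_smul (c : k) (z : KK k n) : psi (c • z) = c • psi z := by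
  rw [Algebra.smul_def, map_mul, psi_algebraMap, ← HahnSeries.C_apply,
    HahnSeries.C_mul_eq_smul]

theorem psi_iota_ne_zero {q : MvPolynomial (Fin n) k} (hq : q ≠ 0) :
    psi (algebraMap (MvPolynomial (Fin n) k) (KK k n) q) ≠ 0 := by
  rw [psi_iota]
  intro h
  exact hq (phi_injective (by rw [h, map_zero]))

theorem deriv_vanish (D : KK k n → LL k n)
    (hmul : ∀ a b : KK k n, D (a * b) = D a * psi b + psi a * D b)
    (hpoly : ∀ p : MvPolynomial (Fin n) k, D (algebraMap _ (KK k n) p) = 0)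
    (f : KK k n) : D f = 0 := by
  obtain ⟨p, q, hq, hfq⟩ := IsFractionRing.div_surjective (A := MvPolynomial (Fin n) k) f
  have hq0 : q ≠ 0 := nonZeroDivisors.ne_zero hq
  have hiq : algebraMap (MvPolynomial (Fin n) k) (KK k n) q ≠ 0 :=
    IsFractionRing.to_map_ne_zero_of_mem_nonZeroDivisors hq
  have hfq' : f * algebraMap (MvPolynomial (Fin n) k) (KK k n) q
      = algebraMap (MvPolynomial (Fin n) k) (KK k n) p := by
    rw [← hfq, div_mul_cancel₀ _ hiq]
  have h0 := hpoly p
  rw [← hfq', hmul, hpoly q, mul_zero, add_zero] at h0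
  exact (mul_eq_zero.mp h0).resolve_right (psi_iota_ne_zero hq0)


section CfunSec

variable (lam : Matrix (Fin n) (Fin n) k)

/-- The candidate bracket on the Hahn series side. -/
def Cfun (f g : KK k n) : LL k n :=
  ∑ i : Fin n, ∑ j : Fin n, lam i j • (EE i (psi f) * EE j (psi g))

theorem Cfun_add_left (a b g : KK k n) :
    Cfun lam (a + b) g = Cfun lam a g + Cfun lam b g := by
  simp only [Cfun, map_add, EE_add, add_mul, smul_add, Finset.sum_add_distrib]

theorem Cfun_add_right (f a b : KK k n) :
    Cfun lam f (a + b) = Cfun lam f a + Cfun lam f b := by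
  simp only [Cfun, map_add, EE_add, mul_add, smul_add, Finset.sum_add_distrib]

theorem Cfun_mul_left (a b g : KK k n) :
    Cfun lam (a * b) g = Cfun lam a g * psi b + psi a * Cfun lam b g := by
  simp only [Cfun, map_mul, EE_mul, add_mul, smul_add, Finset.sum_add_distrib,
    Finset.sum_mul, Finset.mul_sum]
  congr 1
  · apply Finset.sum_congr rfl; intro i _
    apply Finset.sum_congr rfl; intro j _
    rw [smul_mul_LL]
    congr 1
    ring
  · apply Finset.sum_congr rfl; intro i _
    apply Finset.sum_congr rfl; intro j _
    rw [mul_smul_LL]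
    congr 1
    ring

theorem Cfun_mul_right (f a b : KK k n) :
    Cfun lam f (a * b) = Cfun lam f a * psi b + psi a * Cfun lam f b := by
  simp only [Cfun, map_mul, EE_mul, mul_add, smul_add, Finset.sum_add_distrib,
    Finset.sum_mul, Finset.mul_sum]
  congr 1
  · apply Finset.sum_congr rfl; intro i _
    apply Finset.sum_congr rfl; intro j _
    rw [smul_mul_LL]
    congr 1
    ring
  · apply Finset.sum_congr rfl; intro i _
    apply Finset.sum_congr rfl; intro j _
    rw [mul_smul_LL]
    congr 1
    ring

theorem EE_alg (i : Fin n) (c : k) : EE i (psi (algebraMap k (KK k n) c)) = 0 := by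
  rw [psi_algebraMap, EE_single]
  have : ofLex (0 : Lex (Fin n → ℤ)) i = 0 := rfl
  rw [this, zero_smul]
  exact HahnSeries.single_eq_zero

theorem Cfun_alg_left (c : k) (g : KK k n) : Cfun lam (algebraMap k (KK k n) c) g = 0 := by
  simp [Cfun, EE_alg]

theorem Cfun_alg_right (c : k) (f : KK k n) : Cfun lam f (algebraMap k (KK k n) c) = 0 := by
  simp [Cfun, EE_alg]

theorem EE_psi_X (i a : Fin n) :
    EE i (psi (algebraMap (MvPolynomial (Fin n) k) (KK k n) (MvPolynomial.X a)))
      = if i = a then psi (algebraMap (MvPolynomial (Fin n) k) (KK k n) (MvPolynomial.X a))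
        else 0 := by
  rw [psi_iota]
  have hX : (MvPolynomial.X a : MvPolynomial (Fin n) k)
      = monomial (Finsupp.single a 1) 1 := by
    rw [MvPolynomial.X]
  rw [hX, phi_monomial, EE_single]
  have hc : ofLex (toG n (Finsupp.single a 1)) i = if i = a then 1 else 0 := by
    rw [toG_apply, Finsupp.single_apply]
    by_cases h : i = a
    · subst h; simp
    · rw [if_neg h, if_neg (fun hh => h hh.symm)]
      rfl
  rw [hc]
  by_cases h : i = a
  · simp [h]
  · simp [h]

theorem Cfun_X_X (a b : Fin n) :
    Cfun lam (algebraMap (MvPolynomial (Fin n) k) (KK k n) (MvPolynomial.X a))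
        (algebraMap (MvPolynomial (Fin n) k) (KK k n) (MvPolynomial.X b))
      = lam a b • (psi (algebraMap (MvPolynomial (Fin n) k) (KK k n) (MvPolynomial.X a))
          * psi (algebraMap (MvPolynomial (Fin n) k) (KK k n) (MvPolynomial.X b))) := by
  rw [Cfun]
  have key : ∀ i j : Fin n,
      lam i j • (EE i (psi (algebraMap (MvPolynomial (Fin n) k) (KK k n) (MvPolynomial.X a)))
        * EE j (psi (algebraMap (MvPolynomial (Fin n) k) (KK k n) (MvPolynomial.X b))))
      = if i = a ∧ j = b
          then lam a b • (psi (algebraMap (MvPolynomial (Fin n) k) (KK k n) (MvPolynomial.X a))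
            * psi (algebraMap (MvPolynomial (Fin n) k) (KK k n) (MvPolynomial.X b)))
          else 0 := by
    intro i j
    by_cases hi : i = a
    · by_cases hj : j = b
      · subst hi; subst hj; simp [EE_psi_X]
      · simp [EE_psi_X, hi, hj]
    · simp [EE_psi_X, hi]
  simp only [key]
  have h1 : ∀ i : Fin n,
      (∑ j : Fin n, if i = a ∧ j = b
          then lam a b • (psi (algebraMap (MvPolynomial (Fin n) k) (KK k n) (MvPolynomial.X a))
            * psi (algebraMap (MvPolynomial (Fin n) k) (KK k n) (MvPolynomial.X b)))
          else 0)
      = if i = a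
          then lam a b • (psi (algebraMap (MvPolynomial (Fin n) k) (KK k n) (MvPolynomial.X a))
            * psi (algebraMap (MvPolynomial (Fin n) k) (KK k n) (MvPolynomial.X b)))
          else 0 := by
    intro i
    by_cases hi : i = a
    · simp only [hi, true_and]
      rw [Finset.sum_ite_eq' Finset.univ b]
      simp
    · simp [hi]
  rw [Finset.sum_congr rfl (fun i _ => h1 i), Finset.sum_ite_eq' Finset.univ a]
  simp

theorem sum_comm3 {α β γ M : Type*} [AddCommMonoid M] (s : Finset α) (u : Finset β)
    (w : Finset γ) (t : α → β → γ → M) :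
    ∑ i ∈ s, ∑ j ∈ u, ∑ p ∈ w, t i j p = ∑ p ∈ w, ∑ i ∈ s, ∑ j ∈ u, t i j p := by
  rw [Finset.sum_congr rfl (fun i (_ : i ∈ s) => Finset.sum_comm), Finset.sum_comm]

theorem antisym_quad (hlam : Matrix.transpose lam = -lam) [CharZero k] (v : Fin n → k) :
    ∑ i : Fin n, ∑ j : Fin n, lam i j * v i * v j = 0 := by
  set S := ∑ i : Fin n, ∑ j : Fin n, lam i j * v i * v j with hS
  have hskew : ∀ i j, lam j i = -lam i j := by
    intro i j
    have := congrFun (congrFun hlam i) j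
    simpa [Matrix.transpose_apply] using this
  have h2 : S + S = 0 := by
    have hS2 : S = ∑ i : Fin n, ∑ j : Fin n, lam j i * v j * v i := by
      rw [hS, Finset.sum_comm]
    nth_rewrite 2 [hS2]
    rw [hS, ← Finset.sum_add_distrib]
    apply Finset.sum_eq_zero
    intro i _
    rw [← Finset.sum_add_distrib]
    apply Finset.sum_eq_zero
    intro j _
    rw [hskew i j]
    ring
  have h3 : (2 : k) * S = 0 := by rw [two_mul]; exact h2
  exact (mul_eq_zero.mp h3).resolve_left two_ne_zero

theorem ct_Cfun (hlam : Matrix.transpose lam = -lam) [CharZero k] (f g : KK k n) :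
    (Cfun lam f g).coeff 0 = 0 := by
  set F := psi f with hF
  set G := psi g with hG
  rw [Cfun, _root_.coeff_sum]
  have h1 : ∀ i : Fin n,
      (∑ j : Fin n, lam i j • (EE i F * EE j G)).coeff 0
      = ∑ j : Fin n, lam i j * (EE i F * EE j G).coeff 0 := by
    intro i
    rw [_root_.coeff_sum]
    apply Finset.sum_congr rfl
    intro j _
    rw [HahnSeries.coeff_smul, smul_eq_mul]
  rw [Finset.sum_congr rfl (fun i _ => h1 i)]
  have h2 : ∀ i j : Fin n, (EE i F * EE j G).coeff 0
      = ∑ p ∈ Finset.antidiagonal F.isPWO_support G.isPWO_support 0,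
          ((ofLex p.1 i : ℤ) • F.coeff p.1) * ((ofLex p.2 j : ℤ) • G.coeff p.2) := by
    intro i j
    rw [mul_coeff₂ F.isPWO_support G.isPWO_support (EE_support i F) (EE_support j G)]
    rfl
  simp only [h2, Finset.mul_sum]
  rw [sum_comm3]
  apply Finset.sum_eq_zero
  intro p hp
  rw [Finset.mem_addAntidiagonal] at hp
  have hp2 : p.2 = -p.1 := eq_neg_of_add_eq_zero_right hp.2.2
  have hcast : ∀ j : Fin n, ((ofLex p.2 j : ℤ) : k) = -((ofLex p.1 j : ℤ) : k) := by
    intro j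
    rw [hp2]
    have hn : ofLex (-p.1) j = -(ofLex p.1 j) := rfl
    rw [hn, Int.cast_neg]
  have hterm : ∀ i j : Fin n,
      lam i j * (((ofLex p.1 i : ℤ) • F.coeff p.1) * ((ofLex p.2 j : ℤ) • G.coeff p.2))
      = -(lam i j * ((ofLex p.1 i : ℤ):k) * ((ofLex p.1 j : ℤ):k)) * (F.coeff p.1 * G.coeff p.2) := by
    intro i j
    rw [zsmul_eq_mul, zsmul_eq_mul, hcast j]
    ring
  simp only [hterm]
  have : ∑ i : Fin n, ∑ j : Fin n,
      -(lam i j * ((ofLex p.1 i : ℤ):k) * ((ofLex p.1 j : ℤ):k)) * (F.coeff p.1 * G.coeff p.2)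
      = -(∑ i : Fin n, ∑ j : Fin n,
          lam i j * ((ofLex p.1 i : ℤ):k) * ((ofLex p.1 j : ℤ):k)) * (F.coeff p.1 * G.coeff p.2) := by
    simp only [neg_mul, Finset.sum_neg_distrib, Finset.sum_mul]
  rw [this, antisym_quad lam hlam (fun j => ((ofLex p.1 j : ℤ):k)), neg_zero, zero_mul]

end CfunSec

end PoissonAux

open Matrix MvPolynomial in
/-- Proposition 5.2(a): in `K = k_λ(x_1,…,x_n)`, the `k`-span of all Poisson
brackets `{f,g}` meets `k` trivially; in particular no bracket equals `1`. -/
theorem statement13 (k : Type*) [Field k] [CharZero k] (n : ℕ)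
    (lam : Matrix (Fin n) (Fin n) k) (hlam : lamᵀ = -lam)
    (br : FractionRing (MvPolynomial (Fin n) k) → FractionRing (MvPolynomial (Fin n) k) →
      FractionRing (MvPolynomial (Fin n) k))
    (hbr : IsPoissonBracket k br)
    (hquad : ∀ i j : Fin n,
      br (algebraMap (MvPolynomial (Fin n) k) (FractionRing (MvPolynomial (Fin n) k)) (X i))
          (algebraMap (MvPolynomial (Fin n) k) (FractionRing (MvPolynomial (Fin n) k)) (X j))
        = algebraMap (MvPolynomial (Fin n) k) (FractionRing (MvPolynomial (Fin n) k))
            (lam i j • (X i * X j))) :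
    (∀ c : k,
      algebraMap k (FractionRing (MvPolynomial (Fin n) k)) c ∈
        Submodule.span k {z : FractionRing (MvPolynomial (Fin n) k) | ∃ f g, z = br f g} →
      c = 0) ∧
    (∀ x y : FractionRing (MvPolynomial (Fin n) k), br x y ≠ 1) := by
  obtain ⟨hadd_l, hadd_r, hsmul_l, hanti, hjac, hleib_r⟩ := hbr
  have hbr1r : ∀ a, br a 1 = 0 := by
    intro a
    have h := hleib_r a 1 1
    rw [mul_one, mul_one, one_mul] at h
    exact (left_eq_add.mp h)
  have hbr1l : ∀ a, br 1 a = 0 := by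
    intro a
    rw [hanti, hbr1r, neg_zero]
  have hleib_l : ∀ a b c, br (a * b) c = br a c * b + a * br b c := by
    intro a b c
    rw [hanti, hleib_r, hanti c a, hanti c b]
    ring
  have hsmul_r : ∀ (r : k) a b, br a (r • b) = r • br a b := by
    intro r a b
    rw [hanti, hsmul_l, hanti b a, smul_neg, neg_neg]
  have halg_l : ∀ (c : k) g, br (algebraMap k (FractionRing (MvPolynomial (Fin n) k)) c) g
      = 0 := by
    intro c g
    rw [Algebra.algebraMap_eq_smul_one, hsmul_l, hbr1l, smul_zero]
  have halg_r : ∀ (c : k) f, br f (algebraMap k (FractionRing (MvPolynomial (Fin n) k)) c)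
      = 0 := by
    intro c f
    rw [Algebra.algebraMap_eq_smul_one, hsmul_r, hbr1r, smul_zero]
  have htower : ∀ c : k,
      algebraMap (MvPolynomial (Fin n) k) (FractionRing (MvPolynomial (Fin n) k))
        (MvPolynomial.C c) = algebraMap k (FractionRing (MvPolynomial (Fin n) k)) c := by
    intro c
    exact (IsScalarTower.algebraMap_apply k (MvPolynomial (Fin n) k)
      (FractionRing (MvPolynomial (Fin n) k)) c).symm
  -- base case : two variables
  have base : ∀ a b : Fin n,
      psi (br (algebraMap (MvPolynomial (Fin n) k) (FractionRing (MvPolynomial (Fin n) k)) (X a))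
        (algebraMap (MvPolynomial (Fin n) k) (FractionRing (MvPolynomial (Fin n) k)) (X b)))
      = Cfun lam
          (algebraMap (MvPolynomial (Fin n) k) (FractionRing (MvPolynomial (Fin n) k)) (X a))
          (algebraMap (MvPolynomial (Fin n) k) (FractionRing (MvPolynomial (Fin n) k)) (X b)) := by
    intro a b
    rw [hquad a b, psi_iota, Cfun_X_X, _root_.map_smul, _root_.map_mul, psi_iota, psi_iota]
  have agreeXq : ∀ (a : Fin n) (q : MvPolynomial (Fin n) k),
      psi (br (algebraMap (MvPolynomial (Fin n) k) (FractionRing (MvPolynomial (Fin n) k)) (X a))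
        (algebraMap (MvPolynomial (Fin n) k) (FractionRing (MvPolynomial (Fin n) k)) q))
      = Cfun lam
          (algebraMap (MvPolynomial (Fin n) k) (FractionRing (MvPolynomial (Fin n) k)) (X a))
          (algebraMap (MvPolynomial (Fin n) k) (FractionRing (MvPolynomial (Fin n) k)) q) := by
    intro a q
    induction q using MvPolynomial.induction_on with
    | C c => rw [htower, halg_r, _root_.map_zero, Cfun_alg_right]
    | add p q ihp ihq => rw [_root_.map_add, hadd_r, _root_.map_add, Cfun_add_right, ihp, ihq]
    | mul_X p j ih =>
        rw [_root_.map_mul, hleib_r, Cfun_mul_right, _root_.map_add, _root_.map_mul, _root_.map_mul, ih, base a j,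
          psi_iota, psi_iota]
  have agreePq : ∀ p q : MvPolynomial (Fin n) k,
      psi (br (algebraMap (MvPolynomial (Fin n) k) (FractionRing (MvPolynomial (Fin n) k)) p)
        (algebraMap (MvPolynomial (Fin n) k) (FractionRing (MvPolynomial (Fin n) k)) q))
      = Cfun lam
          (algebraMap (MvPolynomial (Fin n) k) (FractionRing (MvPolynomial (Fin n) k)) p)
          (algebraMap (MvPolynomial (Fin n) k) (FractionRing (MvPolynomial (Fin n) k)) q) := by
    intro p q
    induction p using MvPolynomial.induction_on with
    | C c => rw [htower, halg_l, _root_.map_zero, Cfun_alg_left]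
    | add p p' ihp ihp' => rw [_root_.map_add, hadd_l, _root_.map_add, Cfun_add_left, ihp, ihp']
    | mul_X p j ih =>
        rw [_root_.map_mul, hleib_l, Cfun_mul_left, _root_.map_add, _root_.map_mul, _root_.map_mul, ih, agreeXq j q,
          psi_iota, psi_iota]
  have agreePg : ∀ (p : MvPolynomial (Fin n) k) (g : FractionRing (MvPolynomial (Fin n) k)),
      psi (br (algebraMap (MvPolynomial (Fin n) k) (FractionRing (MvPolynomial (Fin n) k)) p) g)
      = Cfun lam
          (algebraMap (MvPolynomial (Fin n) k) (FractionRing (MvPolynomial (Fin n) k)) p) g := by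
    intro p g
    have hD := deriv_vanish
      (fun z => psi (br (algebraMap (MvPolynomial (Fin n) k)
        (FractionRing (MvPolynomial (Fin n) k)) p) z)
        - Cfun lam (algebraMap (MvPolynomial (Fin n) k)
            (FractionRing (MvPolynomial (Fin n) k)) p) z)
      (by
        intro a b
        rw [hleib_r, _root_.map_add, _root_.map_mul, _root_.map_mul, Cfun_mul_right]
        ring)
      (by
        intro q
        rw [agreePq p q, sub_self])
      g
    exact sub_eq_zero.mp hD
  have agree : ∀ f g : FractionRing (MvPolynomial (Fin n) k),
      psi (br f g) = Cfun lam f g := by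
    intro f g
    have hD := deriv_vanish
      (fun z => psi (br z g) - Cfun lam z g)
      (by
        intro a b
        rw [hleib_l, _root_.map_add, _root_.map_mul, _root_.map_mul, Cfun_mul_left]
        ring)
      (by
        intro p
        rw [agreePg p g, sub_self])
      f
    exact sub_eq_zero.mp hD
  -- the linear functional
  let T : FractionRing (MvPolynomial (Fin n) k) →ₗ[k] k :=
    { toFun := fun z => (psi z).coeff 0
      map_add' := fun a b => by
        show (psi (a + b)).coeff 0 = (psi a).coeff 0 + (psi b).coeff 0
        rw [_root_.map_add, HahnSeries.coeff_add]
      map_smul' := fun c z => by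
        show (psi (c • z)).coeff 0 = c * (psi z).coeff 0
        rw [psi_smul, HahnSeries.coeff_smul, smul_eq_mul] }
  have hT : ∀ z : FractionRing (MvPolynomial (Fin n) k), T z = (psi z).coeff 0 := fun _ => rfl
  have hspan : Submodule.span k
      {z : FractionRing (MvPolynomial (Fin n) k) | ∃ f g, z = br f g} ≤ LinearMap.ker T := by
    rw [Submodule.span_le]
    rintro z ⟨f, g, rfl⟩
    rw [SetLike.mem_coe, LinearMap.mem_ker, hT, agree f g, ct_Cfun lam hlam]
  have main : ∀ c : k,
      algebraMap k (FractionRing (MvPolynomial (Fin n) k)) c ∈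
        Submodule.span k {z : FractionRing (MvPolynomial (Fin n) k) | ∃ f g, z = br f g} →
      c = 0 := by
    intro c hc
    have h0 : T (algebraMap k (FractionRing (MvPolynomial (Fin n) k)) c) = 0 :=
      LinearMap.mem_ker.mp (hspan hc)
    rw [hT, psi_algebraMap, HahnSeries.coeff_single_same] at h0
    exact h0
  refine ⟨main, fun x y hxy => ?_⟩
  refine one_ne_zero (main 1 ?_)
  rw [_root_.map_one]
  exact Submodule.subset_span ⟨x, y, hxy.symm⟩
end

section
/- Let λ ∈ M_n(k) be an antisymmetric matrix over a field k of characteristic zero. Then the quadratic Poisson field k_λ(x_1,…,x_n) is not isomorphic as a Poisson algebra to any Poisson-Weyl field; indeed it is not isomorphic to any Poisson field containing elements x, y with {x,y} = 1. -/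
set_option synthInstance.maxHeartbeats 1000000
set_option maxHeartbeats 1000000

open Matrix

namespace S14

noncomputable instance lexInst (n : ℕ) : IsOrderedCancelAddMonoid (Lex (Fin n → ℤ)) :=
  inferInstance

variable {k : Type*} [Field k] {n : ℕ}

abbrev H (n : ℕ) (k : Type*) [Field k] := HahnSeries (Lex (Fin n → ℤ)) k

/-- The `i`-th "Euler" operator `x_i ∂_i` on Hahn series. -/
def E (i : Fin n) (F : H n k) : H n k where
  coeff a := ((ofLex a i : ℤ) : k) * F.coeff a
  isPWO_support' := F.isPWO_support'.mono fun a ha => by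
    simp only [Function.mem_support] at ha ⊢
    exact fun h => ha (by rw [h, mul_zero])

@[simp] theorem E_coeff (i : Fin n) (F : H n k) (a : Lex (Fin n → ℤ)) :
    (E i F).coeff a = ((ofLex a i : ℤ) : k) * F.coeff a := rfl

theorem E_support_subset (i : Fin n) (F : H n k) : (E i F).support ⊆ F.support := by
  intro a ha
  simp only [HahnSeries.mem_support, E_coeff] at ha ⊢
  exact fun h => ha (by rw [h, mul_zero])

theorem E_add (i : Fin n) (F G : H n k) : E i (F + G) = E i F + E i G := by
  ext a
  simp [mul_add]

theorem ofLex_add_apply (a b : Lex (Fin n → ℤ)) (i : Fin n) :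
    ofLex (a + b) i = ofLex a i + ofLex b i := rfl

theorem ofLex_zero_apply (i : Fin n) : ofLex (0 : Lex (Fin n → ℤ)) i = 0 := rfl

theorem ofLex_neg_apply (a : Lex (Fin n → ℤ)) (i : Fin n) :
    ofLex (-a) i = -(ofLex a i) := rfl

theorem E_single (i : Fin n) (g : Lex (Fin n → ℤ)) (c : k) :
    E i (HahnSeries.single g c) = HahnSeries.single g (((ofLex g i : ℤ) : k) * c) := by
  ext a
  rw [E_coeff]
  by_cases h : a = g
  · subst h; rw [HahnSeries.coeff_single_same, HahnSeries.coeff_single_same]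
  · rw [HahnSeries.coeff_single_of_ne h, HahnSeries.coeff_single_of_ne h, mul_zero]

theorem E_C (i : Fin n) (c : k) : E i (HahnSeries.C c) = 0 := by
  rw [HahnSeries.C_apply, E_single, ofLex_zero_apply]
  simp

theorem E_mul (i : Fin n) (F G : H n k) : E i (F * G) = E i F * G + F * E i G := by
  ext a
  rw [HahnSeries.coeff_add, E_coeff, HahnSeries.coeff_mul,
    HahnSeries.coeff_mul_left' F.isPWO_support (E_support_subset i F),
    HahnSeries.coeff_mul_right' G.isPWO_support (E_support_subset i G),
    Finset.mul_sum, ← Finset.sum_add_distrib]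
  refine Finset.sum_congr rfl fun pq hpq => ?_
  obtain ⟨-, -, hsum⟩ := Finset.mem_addAntidiagonal.mp hpq
  rw [← hsum, E_coeff, E_coeff, ofLex_add_apply, Int.cast_add]
  ring

noncomputable def brH (lam : Matrix (Fin n) (Fin n) k) (F G : H n k) : H n k :=
  ∑ i : Fin n, ∑ j : Fin n, HahnSeries.C (lam i j) * (E i F * E j G)

variable (lam : Matrix (Fin n) (Fin n) k)

theorem brH_add_left (F F' G : H n k) :
    brH lam (F + F') G = brH lam F G + brH lam F' G := by
  unfold brH
  rw [← Finset.sum_add_distrib]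
  refine Finset.sum_congr rfl fun i _ => ?_
  rw [← Finset.sum_add_distrib]
  refine Finset.sum_congr rfl fun j _ => ?_
  rw [E_add]; ring

theorem brH_add_right (F G G' : H n k) :
    brH lam F (G + G') = brH lam F G + brH lam F G' := by
  unfold brH
  rw [← Finset.sum_add_distrib]
  refine Finset.sum_congr rfl fun i _ => ?_
  rw [← Finset.sum_add_distrib]
  refine Finset.sum_congr rfl fun j _ => ?_
  rw [E_add]; ring

theorem brH_mul_left (F F' G : H n k) :
    brH lam (F * F') G = brH lam F G * F' + F * brH lam F' G := by
  unfold brH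
  rw [Finset.sum_mul, Finset.mul_sum, ← Finset.sum_add_distrib]
  refine Finset.sum_congr rfl fun i _ => ?_
  rw [Finset.sum_mul, Finset.mul_sum, ← Finset.sum_add_distrib]
  refine Finset.sum_congr rfl fun j _ => ?_
  rw [E_mul]; ring

theorem brH_mul_right (F G G' : H n k) :
    brH lam F (G * G') = brH lam F G * G' + G * brH lam F G' := by
  unfold brH
  rw [Finset.sum_mul, Finset.mul_sum, ← Finset.sum_add_distrib]
  refine Finset.sum_congr rfl fun i _ => ?_
  rw [Finset.sum_mul, Finset.mul_sum, ← Finset.sum_add_distrib]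
  refine Finset.sum_congr rfl fun j _ => ?_
  rw [E_mul]; ring

theorem brH_C_left (c : k) (G : H n k) : brH lam (HahnSeries.C c) G = 0 := by
  unfold brH
  refine Finset.sum_eq_zero fun i _ => Finset.sum_eq_zero fun j _ => ?_
  rw [E_C]; ring

theorem brH_C_right (c : k) (F : H n k) : brH lam F (HahnSeries.C c) = 0 := by
  unfold brH
  refine Finset.sum_eq_zero fun i _ => Finset.sum_eq_zero fun j _ => ?_
  rw [E_C]; ring

theorem coeff_sum {α : Type*} (s : Finset α) (f : α → H n k) (a : Lex (Fin n → ℤ)) :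
    (∑ x ∈ s, f x).coeff a = ∑ x ∈ s, (f x).coeff a :=
  map_sum (HahnSeries.coeff.addMonoidHom a) f s

theorem mul_coeff_both {S T : Set (Lex (Fin n → ℤ))} (hS : S.IsPWO) (hT : T.IsPWO)
    {x y : H n k} (hxS : x.support ⊆ S) (hyT : y.support ⊆ T) (a : Lex (Fin n → ℤ)) :
    (x * y).coeff a = ∑ pq ∈ Finset.addAntidiagonal hS hT a, x.coeff pq.1 * y.coeff pq.2 := by
  rw [HahnSeries.coeff_mul_left' hS hxS]
  apply Finset.sum_subset
  · intro pq h
    rw [Finset.mem_addAntidiagonal] at h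
    refine Finset.mem_addAntidiagonal.mpr ?_
    exact ⟨h.1, hyT h.2.1, h.2.2⟩
  · intro pq hmem hnot
    rw [Finset.mem_addAntidiagonal] at hnot
    replace hmem := Finset.mem_addAntidiagonal.mp hmem
    by_cases h2 : pq.2 ∈ y.support
    · exact absurd ⟨hmem.1, h2, hmem.2.2⟩ hnot
    · rw [Function.notMem_support.mp h2, mul_zero]

theorem tau_brH [CharZero k] (hlam : lamᵀ = -lam) (F G : H n k) :
    (brH lam F G).coeff 0 = 0 := by
  have hanti : ∀ i j, lam j i = - lam i j := fun i j => by
    have h := congrFun (congrFun hlam i) j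
    simpa [Matrix.transpose_apply, Matrix.neg_apply] using h
  unfold brH
  rw [coeff_sum]
  have key : ∀ i j : Fin n, (HahnSeries.C (lam i j) * (E i F * E j G)).coeff 0
      = ∑ pq ∈ Finset.addAntidiagonal F.isPWO_support G.isPWO_support 0,
          lam i j * ((((ofLex pq.1 i : ℤ) : k) * ((ofLex pq.2 j : ℤ) : k))
            * (F.coeff pq.1 * G.coeff pq.2)) := by
    intro i j
    rw [HahnSeries.C_mul_eq_smul, HahnSeries.coeff_smul,
      mul_coeff_both F.isPWO_support G.isPWO_support (E_support_subset i F)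
        (E_support_subset j G), Finset.smul_sum]
    refine Finset.sum_congr rfl fun pq _ => ?_
    rw [E_coeff, E_coeff, smul_eq_mul]; ring
  simp_rw [coeff_sum, key]
  have swap1 : ∀ i : Fin n, (∑ j : Fin n, ∑ pq ∈ Finset.addAntidiagonal F.isPWO_support
        G.isPWO_support 0, lam i j * ((((ofLex pq.1 i : ℤ) : k) * ((ofLex pq.2 j : ℤ) : k))
          * (F.coeff pq.1 * G.coeff pq.2)))
      = ∑ pq ∈ Finset.addAntidiagonal F.isPWO_support G.isPWO_support 0, ∑ j : Fin n,
          lam i j * ((((ofLex pq.1 i : ℤ) : k) * ((ofLex pq.2 j : ℤ) : k))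
            * (F.coeff pq.1 * G.coeff pq.2)) := fun i => Finset.sum_comm
  simp_rw [swap1]
  rw [Finset.sum_comm]
  refine Finset.sum_eq_zero fun pq hpq => ?_
  obtain ⟨-, -, hsum⟩ := Finset.mem_addAntidiagonal.mp hpq
  have hq : pq.2 = -pq.1 := eq_neg_of_add_eq_zero_right hsum
  simp_rw [hq]
  have factored : (∑ i : Fin n, ∑ j : Fin n, lam i j * ((((ofLex pq.1 i : ℤ) : k)
        * ((ofLex (-pq.1) j : ℤ) : k)) * (F.coeff pq.1 * G.coeff (-pq.1))))
      = (∑ i : Fin n, ∑ j : Fin n, lam i j * (((ofLex pq.1 i : ℤ) : k)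
          * ((ofLex (-pq.1) j : ℤ) : k))) * (F.coeff pq.1 * G.coeff (-pq.1)) := by
    rw [Finset.sum_mul]
    refine Finset.sum_congr rfl fun i _ => ?_
    rw [Finset.sum_mul]
    exact Finset.sum_congr rfl fun j _ => by ring
  rw [factored]
  set T := ∑ i : Fin n, ∑ j : Fin n, lam i j
    * (((ofLex pq.1 i : ℤ) : k) * ((ofLex pq.1 j : ℤ) : k)) with hT
  have step1 : (∑ i : Fin n, ∑ j : Fin n, lam i j * (((ofLex pq.1 i : ℤ) : k)
      * ((ofLex (-pq.1) j : ℤ) : k))) = -T := by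
    rw [hT, ← Finset.sum_neg_distrib]
    refine Finset.sum_congr rfl fun i _ => ?_
    rw [← Finset.sum_neg_distrib]
    refine Finset.sum_congr rfl fun j _ => ?_
    rw [ofLex_neg_apply]; push_cast; ring
  have step2 : T = -T := by
    conv_lhs => rw [hT, Finset.sum_comm]
    rw [hT, ← Finset.sum_neg_distrib]
    refine Finset.sum_congr rfl fun j _ => ?_
    rw [← Finset.sum_neg_distrib]
    refine Finset.sum_congr rfl fun i _ => ?_
    rw [hanti i j]; ring
  have hT0 : T = 0 := by
    have h2 : T + T = 0 := by nth_rewrite 2 [step2]; rw [add_neg_cancel]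
    exact add_self_eq_zero.mp h2
  rw [step1, hT0, neg_zero, zero_mul]

/-- exponent of `x_i`. -/
def e1 (n : ℕ) (i : Fin n) : Lex (Fin n → ℤ) := toLex (Pi.single i 1)

/-- embedding of exponents. -/
def emb (d : Fin n →₀ ℕ) : Lex (Fin n → ℤ) := toLex fun i => (d i : ℤ)

theorem emb_injective : Function.Injective (emb (n := n)) := by
  intro d e h
  ext i
  have h2 : (d i : ℤ) = (e i : ℤ) := congrFun (congrArg ofLex h) i
  exact_mod_cast h2

theorem prod_single {α : Type*} (s : Finset α) (g : α → Lex (Fin n → ℤ)) :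
    (∏ i ∈ s, HahnSeries.single (g i) (1 : k)) = HahnSeries.single (∑ i ∈ s, g i) 1 := by
  classical
  induction s using Finset.induction_on with
  | empty => simp [HahnSeries.single_zero_one]
  | insert _ _ hni ih =>
    rw [Finset.prod_insert hni, Finset.sum_insert hni, ih, HahnSeries.single_mul_single, one_mul]

theorem ofLex_finsum_apply {α : Type*} (s : Finset α) (f : α → Lex (Fin n → ℤ)) (j : Fin n) :
    ofLex (∑ i ∈ s, f i) j = ∑ i ∈ s, ofLex (f i) j := by
  classical
  induction s using Finset.induction_on with
  | empty => simp only [Finset.sum_empty]; exact ofLex_zero_apply j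
  | insert _ _ hni ih =>
    rw [Finset.sum_insert hni, Finset.sum_insert hni, ofLex_add_apply, ih]

theorem sum_e1 (d : Fin n →₀ ℕ) : (∑ i ∈ d.support, (d i) • e1 n i) = emb d := by
  have : ∀ j, ofLex (∑ i ∈ d.support, (d i) • e1 n i) j = (d j : ℤ) := by
    intro j
    rw [ofLex_finsum_apply]
    have hterm : ∀ i, ofLex ((d i) • e1 n i) j = (d i : ℤ) * ((Pi.single i 1 : Fin n → ℤ) j) := by
      intro i
      show (d i) • ((Pi.single i 1 : Fin n → ℤ) j) = _
      rw [nsmul_eq_mul]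
    simp_rw [hterm]
    rw [Finset.sum_subset (Finset.subset_univ d.support)
      (by intro i _ hi; rw [Finsupp.notMem_support_iff.mp hi]; simp)]
    rw [Finset.sum_eq_single j (fun i _ hij => by rw [Pi.single_eq_of_ne' hij, mul_zero])
      (fun h => absurd (Finset.mem_univ j) h)]
    rw [Pi.single_eq_same, mul_one]
  exact funext this

variable (k n) in
/-- The embedding of the polynomial ring into Hahn series. -/
noncomputable def phi : MvPolynomial (Fin n) k →ₐ[k] H n k :=
  MvPolynomial.aeval fun i => HahnSeries.single (e1 n i) (1 : k)

theorem phi_X (i : Fin n) : phi k n (MvPolynomial.X i) = HahnSeries.single (e1 n i) 1 :=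
  MvPolynomial.aeval_X _ i

theorem phi_monomial (d : Fin n →₀ ℕ) (c : k) :
    phi k n (MvPolynomial.monomial d c) = HahnSeries.single (emb d) c := by
  rw [phi, MvPolynomial.aeval_monomial]
  have : (d.prod fun i m => HahnSeries.single (e1 n i) (1:k) ^ m)
      = HahnSeries.single (emb d) 1 := by
    rw [Finsupp.prod]
    simp_rw [HahnSeries.single_pow, one_pow]
    rw [prod_single, sum_e1]
  rw [this, HahnSeries.algebraMap_apply, Algebra.algebraMap_self_apply, HahnSeries.C_apply,
    HahnSeries.single_mul_single, zero_add, mul_one]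

theorem phi_coeff (p : MvPolynomial (Fin n) k) (d : Fin n →₀ ℕ) :
    (phi k n p).coeff (emb d) = MvPolynomial.coeff d p := by
  conv_lhs => rw [p.as_sum, map_sum, coeff_sum]
  simp_rw [phi_monomial]
  by_cases hd : d ∈ p.support
  · rw [Finset.sum_eq_single_of_mem d hd
      (fun v _ hne => HahnSeries.coeff_single_of_ne (fun he => hne (emb_injective he).symm))]
    exact HahnSeries.coeff_single_same _ _
  · rw [Finset.sum_eq_zero
      (fun v hv => HahnSeries.coeff_single_of_ne (fun he => hd (by rw [emb_injective he]; exact hv)))]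
    exact (MvPolynomial.notMem_support_iff.mp hd).symm

theorem phi_injective : Function.Injective (phi k n) := by
  intro p q h
  apply MvPolynomial.ext
  intro m
  rw [← phi_coeff, ← phi_coeff, h]

theorem phi_C (c : k) : phi k n (MvPolynomial.C c) = HahnSeries.C c := by
  rw [show (MvPolynomial.C c : MvPolynomial (Fin n) k) = MvPolynomial.monomial 0 c from rfl,
    phi_monomial]
  rw [show emb (0 : Fin n →₀ ℕ) = 0 from rfl]
  rw [HahnSeries.C_apply]



variable {k : Type*} [Field k] {n : ℕ}

variable (k n) in
/-- The embedding of the rational function field into Hahn series. -/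
noncomputable def Phi : FractionRing (MvPolynomial (Fin n) k) →+* H n k :=
  IsFractionRing.lift (g := (phi k n).toRingHom) phi_injective

theorem Phi_alg (p : MvPolynomial (Fin n) k) :
    Phi k n (algebraMap (MvPolynomial (Fin n) k) (FractionRing (MvPolynomial (Fin n) k)) p)
      = phi k n p :=
  IsFractionRing.lift_algebraMap _ _

/-- Two Φ-derivations on the fraction field agreeing on the variables agree. -/
theorem deriv_eq (D1 D2 : FractionRing (MvPolynomial (Fin n) k) → H n k)
    (h1a : ∀ a b, D1 (a + b) = D1 a + D1 b)
    (h2a : ∀ a b, D2 (a + b) = D2 a + D2 b)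
    (h1m : ∀ a b, D1 (a * b) = D1 a * Phi k n b + Phi k n a * D1 b)
    (h2m : ∀ a b, D2 (a * b) = D2 a * Phi k n b + Phi k n a * D2 b)
    (h1C : ∀ c : k, D1 (algebraMap k (FractionRing (MvPolynomial (Fin n) k)) c) = 0)
    (h2C : ∀ c : k, D2 (algebraMap k (FractionRing (MvPolynomial (Fin n) k)) c) = 0)
    (hX : ∀ i, D1 (algebraMap (MvPolynomial (Fin n) k) _ (MvPolynomial.X i))
      = D2 (algebraMap (MvPolynomial (Fin n) k) _ (MvPolynomial.X i))) :
    ∀ z, D1 z = D2 z := by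
  have halgC : ∀ c : k, algebraMap (MvPolynomial (Fin n) k) (FractionRing (MvPolynomial (Fin n) k)) (MvPolynomial.C c) = algebraMap k (FractionRing (MvPolynomial (Fin n) k)) c := by
    intro c
    rw [IsScalarTower.algebraMap_apply k (MvPolynomial (Fin n) k) (FractionRing (MvPolynomial (Fin n) k)) c]
    rfl
  have hpoly : ∀ p : MvPolynomial (Fin n) k, D1 (algebraMap _ _ p) = D2 (algebraMap _ _ p) := by
    intro p
    induction p using MvPolynomial.induction_on with
    | C c => rw [halgC, h1C, h2C]
    | add p q hp hq => rw [RingHom.map_add, h1a, h2a, hp, hq]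
    | mul_X p i hp => rw [RingHom.map_mul, h1m, h2m, hp, hX i]
  intro z
  obtain ⟨p, q, hq, hz⟩ := IsFractionRing.div_surjective (A := MvPolynomial (Fin n) k) z
  have hq0 : q ≠ 0 := nonZeroDivisors.ne_zero hq
  have halgq0 : algebraMap (MvPolynomial (Fin n) k) (FractionRing (MvPolynomial (Fin n) k)) q ≠ 0 := fun h =>
    hq0 (IsFractionRing.injective (MvPolynomial (Fin n) k)
      (FractionRing (MvPolynomial (Fin n) k)) (by rw [h, _root_.map_zero]))
  have hzq : z * algebraMap _ _ q = algebraMap _ _ p := by rw [← hz, div_mul_cancel₀ _ halgq0]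
  have hPq0 : Phi k n (algebraMap _ _ q) ≠ 0 := by
    rw [Phi_alg]
    exact fun h => hq0 (phi_injective (by rw [h, _root_.map_zero]))
  have key : D1 z * Phi k n (algebraMap _ _ q) + Phi k n z * D1 (algebraMap _ _ q)
      = D2 z * Phi k n (algebraMap _ _ q) + Phi k n z * D2 (algebraMap _ _ q) := by
    rw [← h1m, ← h2m, hzq, hpoly]
  rw [hpoly q] at key
  exact mul_right_cancel₀ hPq0 (add_right_cancel key)

variable (lam : Matrix (Fin n) (Fin n) k)

theorem bridge
    (br : FractionRing (MvPolynomial (Fin n) k) → FractionRing (MvPolynomial (Fin n) k) →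
      FractionRing (MvPolynomial (Fin n) k))
    (hbr : IsPoissonBracket k br)
    (hquad : ∀ i j : Fin n,
      br (algebraMap (MvPolynomial (Fin n) k) (FractionRing (MvPolynomial (Fin n) k))
            (MvPolynomial.X i))
          (algebraMap (MvPolynomial (Fin n) k) (FractionRing (MvPolynomial (Fin n) k))
            (MvPolynomial.X j))
        = algebraMap (MvPolynomial (Fin n) k) (FractionRing (MvPolynomial (Fin n) k))
            (lam i j • (MvPolynomial.X i * MvPolynomial.X j))) :
    ∀ a b, Phi k n (br a b) = brH lam (Phi k n a) (Phi k n b) := by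
  obtain ⟨hadd1, hadd2, hsmul, hanti, hjac, hleib⟩ := hbr
  have hone : ∀ a, br a 1 = 0 := by
    intro a
    have h := hleib a 1 1
    rw [mul_one, mul_one, one_mul] at h
    have h2 : br a 1 + br a 1 = br a 1 + 0 := by rw [add_zero, ← h]
    exact (add_left_cancel h2)
  have honeL : ∀ a, br 1 a = 0 := fun a => by rw [hanti, hone, neg_zero]
  have hCL : ∀ (c : k) a, br (algebraMap k (FractionRing (MvPolynomial (Fin n) k)) c) a = 0 := by
    intro c a
    rw [Algebra.algebraMap_eq_smul_one, hsmul, honeL, smul_zero]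
  have hCR : ∀ (c : k) a, br a (algebraMap k (FractionRing (MvPolynomial (Fin n) k)) c) = 0 := fun c a => by
    rw [hanti, hCL, neg_zero]
  have hmulL : ∀ a a' b, br (a * a') b = br a b * a' + a * br a' b := by
    intro a a' b
    rw [hanti (a * a') b, hleib b a a', hanti b a, hanti b a']
    ring
  have halgC : ∀ c : k, algebraMap (MvPolynomial (Fin n) k) (FractionRing (MvPolynomial (Fin n) k)) (MvPolynomial.C c) = algebraMap k (FractionRing (MvPolynomial (Fin n) k)) c := by
    intro c
    rw [IsScalarTower.algebraMap_apply k (MvPolynomial (Fin n) k) (FractionRing (MvPolynomial (Fin n) k)) c]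
    rfl
  have hPhiC : ∀ c : k, Phi k n (algebraMap k (FractionRing (MvPolynomial (Fin n) k)) c) = HahnSeries.C c := by
    intro c
    rw [← halgC, Phi_alg, phi_C]
  -- Step A: agreement when the second argument is a variable
  have stepA : ∀ (j : Fin n) a, Phi k n (br a (algebraMap (MvPolynomial (Fin n) k) _ (MvPolynomial.X j)))
      = brH lam (Phi k n a) (Phi k n (algebraMap (MvPolynomial (Fin n) k) _ (MvPolynomial.X j))) := by
    intro j
    refine deriv_eq (fun a => Phi k n (br a (algebraMap (MvPolynomial (Fin n) k) _ (MvPolynomial.X j))))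
      (fun a => brH lam (Phi k n a) (Phi k n (algebraMap (MvPolynomial (Fin n) k) _ (MvPolynomial.X j))))
      (fun a b => by beta_reduce; rw [hadd1, _root_.map_add])
      (fun a b => by beta_reduce; rw [_root_.map_add, brH_add_left])
      (fun a b => by beta_reduce; rw [hmulL, _root_.map_add, _root_.map_mul, _root_.map_mul])
      (fun a b => by beta_reduce; rw [_root_.map_mul, brH_mul_left])
      (fun c => by beta_reduce; rw [hCL, _root_.map_zero])
      (fun c => by beta_reduce; rw [hPhiC, brH_C_left])
      (fun i => ?_)
    -- the generators
    beta_reduce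
    have hEzero : ∀ (p i' : Fin n), p ≠ i' → E p (HahnSeries.single (e1 n i') (1:k)) = 0 := by
      intro p i' hp
      rw [E_single, show (ofLex (e1 n i') p : ℤ) = 0 from Pi.single_eq_of_ne hp 1,
        Int.cast_zero, zero_mul]
      exact HahnSeries.single_eq_zero
    have hEsame : ∀ i' : Fin n, E i' (HahnSeries.single (e1 n i') (1:k))
        = HahnSeries.single (e1 n i') 1 := by
      intro i'
      rw [E_single, show (ofLex (e1 n i') i' : ℤ) = 1 from Pi.single_eq_same i' 1,
        Int.cast_one, one_mul]
    rw [hquad i j, Phi_alg, Phi_alg, Phi_alg, _root_.map_smul, _root_.map_mul, phi_X, phi_X]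
    unfold brH
    rw [Finset.sum_eq_single i
      (fun p _ hpi => Finset.sum_eq_zero fun q _ => by rw [hEzero p i hpi, zero_mul, mul_zero])
      (fun h => absurd (Finset.mem_univ i) h)]
    rw [Finset.sum_eq_single j
      (fun q _ hqj => by rw [hEzero q j hqj, mul_zero, mul_zero])
      (fun h => absurd (Finset.mem_univ j) h)]
    rw [hEsame i, hEsame j, HahnSeries.C_mul_eq_smul]
  -- Step B: general
  intro a b
  refine deriv_eq (fun b => Phi k n (br a b)) (fun b => brH lam (Phi k n a) (Phi k n b))
    (fun b c => by beta_reduce; rw [hadd2, _root_.map_add])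
    (fun b c => by beta_reduce; rw [_root_.map_add, brH_add_right])
    (fun b c => by beta_reduce; rw [hleib, _root_.map_add, _root_.map_mul, _root_.map_mul])
    (fun b c => by beta_reduce; rw [_root_.map_mul, brH_mul_right])
    (fun c => by beta_reduce; rw [hCR, _root_.map_zero])
    (fun c => by beta_reduce; rw [hPhiC, brH_C_right])
    (fun i => stepA i a) b

end S14

open Matrix MvPolynomial in
/-- Corollary 5.3: `k_λ(x_1,…,x_n)` is not isomorphic as a Poisson algebra to
any Poisson field containing elements `x`, `y` with `{x,y} = 1` — in
particular, not to any Poisson–Weyl field. -/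
theorem statement14 (k : Type*) [Field k] [CharZero k] (n : ℕ)
    (lam : Matrix (Fin n) (Fin n) k) (hlam : lamᵀ = -lam)
    (br : FractionRing (MvPolynomial (Fin n) k) → FractionRing (MvPolynomial (Fin n) k) →
      FractionRing (MvPolynomial (Fin n) k))
    (hbr : IsPoissonBracket k br)
    (hquad : ∀ i j : Fin n,
      br (algebraMap (MvPolynomial (Fin n) k) (FractionRing (MvPolynomial (Fin n) k)) (X i))
          (algebraMap (MvPolynomial (Fin n) k) (FractionRing (MvPolynomial (Fin n) k)) (X j))
        = algebraMap (MvPolynomial (Fin n) k) (FractionRing (MvPolynomial (Fin n) k))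
            (lam i j • (X i * X j)))
    -- a Poisson field containing elements with bracket `1`
    (L : Type*) [Field L] [Algebra k L]
    (brL : L → L → L) (hbrL : IsPoissonBracket k brL)
    (x y : L) (hxy : brL x y = 1) :
    ¬ ∃ e : FractionRing (MvPolynomial (Fin n) k) ≃ₐ[k] L,
        ∀ a b, e (br a b) = brL (e a) (e b) := by
  rintro ⟨e, he⟩
  have h1 : br (e.symm x) (e.symm y) = 1 := by
    apply e.injective
    rw [he, e.apply_symm_apply, e.apply_symm_apply, hxy, _root_.map_one]
  have h2 := S14.bridge lam br hbr hquad (e.symm x) (e.symm y)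
  rw [h1, _root_.map_one] at h2
  have h3 := congrArg (fun F => F.coeff 0) h2
  beta_reduce at h3
  rw [S14.tau_brH lam hlam, HahnSeries.coeff_one, if_pos rfl] at h3
  exact one_ne_zero h3
end
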